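/- arXiv:2402.15834 — 4 statements merged into one kernel-verified Lean document; each statement's English description precedes it below -/
import Mathlib

section
/- Let r be an even positive integer. There is no function f : ℕ → ℕ satisfying tree-μ(G^r) ≤ f(tree-μ(G)) for all finite simple graphs G; that is, for every function f : ℕ → ℕ there exists a finite simple graph G with tree-μ(G^r) > f(tree-μ(G)). -/
open SimpleGraph

namespace Paper

/-- A tree decomposition of a graph `G`. -/
structure TreeDecomp {V : Type} (G : SimpleGraph V) where
  ι : Type
  fin : Fintype ι
  tree : SimpleGraph ι
  isTree : tree.IsTree
  bag : ι → Set V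
  mem_bag : ∀ v : V, ∃ t, v ∈ bag t
  edge_bag : ∀ ⦃u w : V⦄, G.Adj u w → ∃ t, u ∈ bag t ∧ w ∈ bag t
  coherent : ∀ v : V, (tree.induce {t | v ∈ bag t}).Connected

/-- `M` is an induced matching in `G`: a set of edges, pairwise disjoint,
with no edge of `G` joining endpoints of distinct edges of `M`. -/
def IsInducedMatching {V : Type} (G : SimpleGraph V) (M : Finset (V × V)) : Prop :=
  (∀ p ∈ M, G.Adj p.1 p.2) ∧
    ∀ p ∈ M, ∀ q ∈ M, p ≠ q →
      (p.1 ≠ q.1 ∧ p.1 ≠ q.2 ∧ p.2 ≠ q.1 ∧ p.2 ≠ q.2) ∧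
      (¬ G.Adj p.1 q.1 ∧ ¬ G.Adj p.1 q.2 ∧ ¬ G.Adj p.2 q.1 ∧ ¬ G.Adj p.2 q.2)

/-- Every edge of `M` has an endpoint in `X`. -/
def Touches {V : Type} (M : Finset (V × V)) (X : Set V) : Prop :=
  ∀ p ∈ M, p.1 ∈ X ∨ p.2 ∈ X

/-- μ(𝒯): the maximum size of an induced matching of `G` all of whose edges
touch a common bag of the tree decomposition `D`. -/
noncomputable def mu {V : Type} (G : SimpleGraph V) (D : TreeDecomp G) : ℕ :=
  sSup {n | ∃ (t : D.ι) (M : Finset (V × V)),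
    IsInducedMatching G M ∧ Touches M (D.bag t) ∧ M.card = n}

/-- Induced matching treewidth: minimum of μ(𝒯) over tree decompositions. -/
noncomputable def treeMu {V : Type} (G : SimpleGraph V) : ℕ :=
  sInf {n | ∃ D : TreeDecomp G, mu G D = n}

/-- `S` is an independent set of `G`. -/
def IsIndepSet {V : Type} (G : SimpleGraph V) (S : Finset V) : Prop :=
  ∀ u ∈ S, ∀ v ∈ S, u ≠ v → ¬ G.Adj u v

/-- α(𝒯): the maximum size of an independent set of `G` contained in a bag. -/
noncomputable def alphaTD {V : Type} (G : SimpleGraph V) (D : TreeDecomp G) : ℕ :=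
  sSup {n | ∃ (t : D.ι) (S : Finset V),
    IsIndepSet G S ∧ ↑S ⊆ D.bag t ∧ S.card = n}

/-- Tree-independence number: minimum of α(𝒯) over tree decompositions. -/
noncomputable def treeAlpha {V : Type} (G : SimpleGraph V) : ℕ :=
  sInf {n | ∃ D : TreeDecomp G, alphaTD G D = n}

/-- The `k`-th power of `G`: distinct vertices adjacent iff their distance in `G`
is at most `k` (for `k = 0` this is the edgeless graph). -/
def power {V : Type} (G : SimpleGraph V) (k : ℕ) : SimpleGraph V :=
  SimpleGraph.fromRel (fun u v => G.Reachable u v ∧ G.dist u v ≤ k)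

/-- The graph `G°[ℋ]` for a family `ℋ = {H j}` of subgraphs of `G`: vertices are
indices `j`, two distinct indices adjacent iff the subgraphs share a vertex or
there is an edge of `G` between them. -/
def blowup {V J : Type} (G : SimpleGraph V) (H : J → G.Subgraph) : SimpleGraph J :=
  SimpleGraph.fromRel (fun i j =>
    ((H i).verts ∩ (H j).verts).Nonempty ∨
      ∃ u ∈ (H i).verts, ∃ v ∈ (H j).verts, G.Adj u v)


section TreeUtils

variable {ι : Type} {T : SimpleGraph ι}

/-- There is a walk from `u` to `v` all of whose vertices lie in `S`. -/
def ReachIn (T : SimpleGraph ι) (S : Set ι) (u v : ι) : Prop :=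
  ∃ w : T.Walk u v, ∀ x ∈ w.support, x ∈ S

/-- `S` is connected in the sense that any two of its vertices are joined by a walk inside it. -/
def SetConn (T : SimpleGraph ι) (S : Set ι) : Prop :=
  ∀ u ∈ S, ∀ v ∈ S, ReachIn T S u v

lemma ReachIn.mono {S S' : Set ι} (h : S ⊆ S') {u v : ι} (hr : ReachIn T S u v) :
    ReachIn T S' u v := by
  obtain ⟨w, hw⟩ := hr
  exact ⟨w, fun x hx => h (hw x hx)⟩

lemma ReachIn.trans {S : Set ι} {u v x : ι} (h1 : ReachIn T S u v) (h2 : ReachIn T S v x) :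
    ReachIn T S u x := by
  obtain ⟨w1, hw1⟩ := h1
  obtain ⟨w2, hw2⟩ := h2
  refine ⟨w1.append w2, fun y hy => ?_⟩
  rw [Walk.mem_support_append_iff] at hy
  exact hy.elim (hw1 y) (hw2 y)

lemma ReachIn.symm {S : Set ι} {u v : ι} (h : ReachIn T S u v) : ReachIn T S v u := by
  obtain ⟨w, hw⟩ := h
  exact ⟨w.reverse, fun x hx => hw x (by rwa [Walk.support_reverse, List.mem_reverse] at hx)⟩

lemma reachIn_of_induce_connected {S : Set ι} (h : (T.induce S).Connected)
    {u v : ι} (hu : u ∈ S) (hv : v ∈ S) : ReachIn T S u v := by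
  have key : ∀ (x y : ↥S) (w : (T.induce S).Walk x y), ReachIn T S x.1 y.1 := by
    intro x y w
    induction w with
    | @nil a => exact ⟨Walk.nil, by rintro z hz; simp at hz; subst hz; exact a.2⟩
    | @cons a b c hadj p ih =>
      have hadj' : T.Adj a.1 b.1 := by simpa using hadj
      obtain ⟨w', hw'⟩ := ih
      exact ⟨Walk.cons hadj' w', by
        rintro z hz
        rw [Walk.support_cons, List.mem_cons] at hz
        rcases hz with rfl | hz
        · exact a.2
        · exact hw' z hz⟩
  obtain ⟨w⟩ := h.preconnected ⟨u, hu⟩ ⟨v, hv⟩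
  exact key ⟨u, hu⟩ ⟨v, hv⟩ w

lemma induce_connected_of_setConn {S : Set ι} (hne : S.Nonempty) (h : SetConn T S) :
    (T.induce S).Connected := by
  obtain ⟨z, hz⟩ := hne
  have key : ∀ (u v : ι) (w : T.Walk u v), (∀ x ∈ w.support, x ∈ S) →
      ∀ (hu : u ∈ S) (hv : v ∈ S), (T.induce S).Reachable ⟨u, hu⟩ ⟨v, hv⟩ := by
    intro u v w
    induction w with
    | nil => intro _ hu hv; rfl
    | @cons a b c hadj p ih =>
      intro hsup hu hv
      have hb : b ∈ S := hsup b (by simp)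
      have h1 : (T.induce S).Adj ⟨a, hu⟩ ⟨b, hb⟩ := by simpa using hadj
      exact (Adj.reachable h1).trans (ih (fun x hx => hsup x (by simp [hx])) hb hv)
  haveI : Nonempty ↥S := ⟨⟨z, hz⟩⟩
  refine ⟨?_⟩
  rintro ⟨u, hu⟩ ⟨v, hv⟩
  obtain ⟨w, hw⟩ := h u hu v hv
  exact key u v w hw hu hv

lemma setConn_of_induce_connected {S : Set ι} (h : (T.induce S).Connected) : SetConn T S :=
  fun u hu v hv => reachIn_of_induce_connected h hu hv

/-- In a tree, paths with the same endpoints are equal. -/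
lemma path_eq (hT : T.IsTree) {u v : ι} {p q : T.Walk u v} (hp : p.IsPath) (hq : q.IsPath) :
    p = q := by
  have := hT.IsAcyclic.path_unique ⟨p, hp⟩ ⟨q, hq⟩
  exact congrArg Subtype.val this

lemma exists_path_in {S : Set ι} {u v : ι} (hS : ReachIn T S u v) :
    ∃ w : T.Walk u v, w.IsPath ∧ ∀ x ∈ w.support, x ∈ S := by
  classical
  obtain ⟨w, hw⟩ := hS
  exact ⟨w.bypass, w.bypass_isPath, fun x hx => hw x (w.support_bypass_subset hx)⟩

/-- In a tree, the (unique) path between two vertices of a `SetConn` set stays in the set. -/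
lemma path_support_in (hT : T.IsTree) {S : Set ι} {u v : ι} {p : T.Walk u v}
    (hp : p.IsPath) (hS : ReachIn T S u v) : ∀ x ∈ p.support, x ∈ S := by
  obtain ⟨w, hwp, hws⟩ := exists_path_in hS
  rw [path_eq hT hp hwp]
  exact hws

lemma SetConn.inter (hT : T.IsTree) {S₁ S₂ : Set ι} (h1 : SetConn T S₁) (h2 : SetConn T S₂) :
    SetConn T (S₁ ∩ S₂) := by
  rintro u ⟨hu1, hu2⟩ v ⟨hv1, hv2⟩
  obtain ⟨w, hwp, hws⟩ := exists_path_in (h1 u hu1 v hv1)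
  have hws2 := path_support_in hT hwp (h2 u hu2 v hv2)
  exact ⟨w, fun x hx => ⟨hws x hx, hws2 x hx⟩⟩

/-- Split a walk at the first vertex satisfying `Q`. -/
lemma firstSplit (Q : ι → Prop) {b c : ι} (w : T.Walk b c) (hc : Q c) :
    ∃ (m : ι) (w₁ : T.Walk b m) (w₂ : T.Walk m c), w = w₁.append w₂ ∧ Q m ∧
      ∀ x ∈ w₁.support, x ≠ m → ¬ Q x := by
  induction w with
  | nil =>
    exact ⟨_, Walk.nil, Walk.nil, rfl, hc, by rintro x hx hne; simp at hx; exact absurd hx hne⟩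
  | @cons a b' c' hadj p ih =>
    by_cases hQ : Q a
    · exact ⟨a, Walk.nil, Walk.cons hadj p, rfl, hQ,
        by rintro x hx hne; simp at hx; exact absurd hx hne⟩
    · obtain ⟨m, w₁, w₂, heq, hm, hfirst⟩ := ih hc
      refine ⟨m, Walk.cons hadj w₁, w₂, by rw [Walk.cons_append, heq], hm, ?_⟩
      intro x hx hne
      rw [Walk.support_cons, List.mem_cons] at hx
      rcases hx with rfl | hx
      · exact hQ
      · exact hfirst x hx hne

/-- Helly property for three connected subsets of a tree. -/
lemma helly3 (hT : T.IsTree) {S₁ S₂ S₃ : Set ι}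
    (h1 : SetConn T S₁) (h2 : SetConn T S₂) (h3 : SetConn T S₃)
    (h12 : (S₁ ∩ S₂).Nonempty) (h13 : (S₁ ∩ S₃).Nonempty) (h23 : (S₂ ∩ S₃).Nonempty) :
    ∃ t, t ∈ S₁ ∧ t ∈ S₂ ∧ t ∈ S₃ := by
  classical
  obtain ⟨c, hc1, hc2⟩ := h12
  obtain ⟨b, hb1, hb3⟩ := h13
  obtain ⟨a, ha2, ha3⟩ := h23
  obtain ⟨p, hpPath, hp1⟩ := exists_path_in (h1 b hb1 c hc1)
  obtain ⟨q, hqPath, hq2⟩ := exists_path_in (h2 a ha2 c hc2)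
  obtain ⟨m, w₁, w₂, hsplit, hm, hfirst⟩ := firstSplit (· ∈ q.support) p q.end_mem_support
  have hw₁Path : w₁.IsPath := by
    have := hsplit ▸ hpPath
    exact this.of_append_left
  have hmw₁ : m ∈ w₁.support := w₁.end_mem_support
  have hm1 : m ∈ S₁ := hp1 m (by rw [hsplit]; exact Walk.subset_support_append_left _ _ hmw₁)
  have hm2 : m ∈ S₂ := hq2 m hm
  -- build a path from b to a through m
  have hq₁Path : (q.takeUntil m hm).IsPath := hqPath.takeUntil hm
  set q₁ : T.Walk a m := q.takeUntil m hm with hq₁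
  have hWPath : (w₁.append q₁.reverse).IsPath := by
    rw [Walk.isPath_def, Walk.support_append]
    have h1' : w₁.support.Nodup := hw₁Path.support_nodup
    have h2' : q₁.reverse.support.Nodup := hq₁Path.reverse.support_nodup
    have hhead : q₁.reverse.support = m :: q₁.reverse.support.tail := q₁.reverse.support_eq_cons
    refine List.Nodup.append h1' (by
      have := h2'
      rw [hhead] at this
      exact this.of_cons) ?_
    intro x hx1 hx2
    -- x in w₁.support and in tail of q₁.reverse.support
    have hxq : x ∈ q₁.reverse.support := by rw [hhead]; exact List.mem_cons_of_mem _ hx2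
    have hxne : x ≠ m := by
      intro h
      subst h
      rw [hhead] at h2'
      exact (List.nodup_cons.mp h2').1 hx2
    have hxq' : x ∈ q.support := by
      rw [Walk.support_reverse, List.mem_reverse] at hxq
      exact q.support_takeUntil_subset hm (hq₁ ▸ hxq)
    exact hfirst x hx1 hxne hxq'
  obtain ⟨p₃, hp₃Path, hp₃⟩ := exists_path_in (h3 b hb3 a ha3)
  have heq : w₁.append q₁.reverse = p₃ := path_eq hT hWPath hp₃Path
  have hm3 : m ∈ S₃ := by
    apply hp₃ m
    rw [← heq]
    exact Walk.subset_support_append_left _ _ hmw₁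
  exact ⟨m, hm1, hm2, hm3⟩

/-- Helly property for a finite family of connected subsets of a tree. -/
lemma hellyList (hT : T.IsTree) [Nonempty ι] :
    ∀ (L : List (Set ι)), (∀ S ∈ L, SetConn T S) →
      (∀ S ∈ L, ∀ S' ∈ L, (S ∩ S').Nonempty) → ∃ t, ∀ S ∈ L, t ∈ S := by
  have H : ∀ (n : ℕ) (L : List (Set ι)), L.length ≤ n → (∀ S ∈ L, SetConn T S) →
      (∀ S ∈ L, ∀ S' ∈ L, (S ∩ S').Nonempty) → ∃ t, ∀ S ∈ L, t ∈ S := by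
    intro n
    induction n with
    | zero =>
      intro L hL _ _
      rw [Nat.le_zero, List.length_eq_zero_iff] at hL
      subst hL
      exact ⟨Classical.arbitrary ι, by simp⟩
    | succ n ih =>
      intro L hL hconn hpair
      match L with
      | [] => exact ⟨Classical.arbitrary ι, by simp⟩
      | [S] =>
        obtain ⟨t, ht, _⟩ := hpair S (by simp) S (by simp)
        exact ⟨t, by simpa using ht⟩
      | S₁ :: S₂ :: L' =>
        have hc1 : SetConn T S₁ := hconn S₁ (by simp)
        have hc2 : SetConn T S₂ := hconn S₂ (by simp)
        have hlen : ((S₁ ∩ S₂) :: L').length ≤ n := by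
          simp only [List.length_cons] at hL ⊢
          omega
        obtain ⟨t, ht⟩ := ih ((S₁ ∩ S₂) :: L') hlen
          (by
            rintro S hS
            rcases List.mem_cons.mp hS with rfl | hS
            · exact hc1.inter hT hc2
            · exact hconn S (by simp [hS]))
          (by
            rintro S hS S' hS'
            rcases List.mem_cons.mp hS with rfl | hS <;>
              rcases List.mem_cons.mp hS' with rfl | hS'
            · obtain ⟨t, ht⟩ := hpair S₁ (by simp) S₂ (by simp)
              exact ⟨t, ht, ht⟩
            · -- (S₁ ∩ S₂) ∩ S'
              obtain ⟨t, h1, h2, h3⟩ := helly3 hT hc1 hc2 (hconn S' (by simp [hS']))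
                (hpair S₁ (by simp) S₂ (by simp))
                (hpair S₁ (by simp) S' (by simp [hS']))
                (hpair S₂ (by simp) S' (by simp [hS']))
              exact ⟨t, ⟨h1, h2⟩, h3⟩
            · obtain ⟨t, h1, h2, h3⟩ := helly3 hT hc1 hc2 (hconn S (by simp [hS]))
                (hpair S₁ (by simp) S₂ (by simp))
                (hpair S₁ (by simp) S (by simp [hS]))
                (hpair S₂ (by simp) S (by simp [hS]))
              exact ⟨t, h3, ⟨h1, h2⟩⟩
            · exact hpair S (by simp [hS]) S' (by simp [hS']))
        obtain ⟨ht1, ht2⟩ := ht (S₁ ∩ S₂) (by simp)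
        refine ⟨t, ?_⟩
        rintro S hS
        rcases List.mem_cons.mp hS with rfl | hS
        · exact ht1
        rcases List.mem_cons.mp hS with rfl | hS
        · exact ht2
        · exact ht S (by simp [hS])
  intro L
  exact H L.length L le_rfl

end TreeUtils

section DecompUtils

variable {V : Type} {Gr : SimpleGraph V}

/-- The set of decomposition nodes whose bag meets `C`. -/
def nodesMeeting (D : TreeDecomp Gr) (C : Set V) : Set D.ι := {t | ∃ v ∈ C, v ∈ D.bag t}

lemma bagNodes_setConn (D : TreeDecomp Gr) (v : V) : SetConn D.tree {t | v ∈ D.bag t} :=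
  setConn_of_induce_connected (D.coherent v)

lemma nodesMeeting_setConn (D : TreeDecomp Gr) (C : Set V)
    (hcl : ∀ u ∈ C, ∀ v ∈ C, u = v ∨ Gr.Adj u v) :
    SetConn D.tree (nodesMeeting D C) := by
  rintro t ⟨u, huC, hu⟩ t' ⟨v, hvC, hv⟩
  obtain ⟨t₁, h1, h2⟩ : ∃ t₁, u ∈ D.bag t₁ ∧ v ∈ D.bag t₁ := by
    rcases hcl u huC v hvC with rfl | hadj
    · exact ⟨t, hu, hu⟩
    · exact D.edge_bag hadj
  have r1 : ReachIn D.tree {s | u ∈ D.bag s} t t₁ := bagNodes_setConn D u t hu t₁ h1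
  have r2 : ReachIn D.tree {s | v ∈ D.bag s} t₁ t' := bagNodes_setConn D v t₁ h2 t' hv
  exact (r1.mono (fun s hs => show s ∈ nodesMeeting D C from ⟨u, huC, hs⟩)).trans
    (r2.mono (fun s hs => show s ∈ nodesMeeting D C from ⟨v, hvC, hs⟩))

lemma nodesMeeting_nonempty (D : TreeDecomp Gr) {C : Set V} (hne : C.Nonempty) :
    (nodesMeeting D C).Nonempty := by
  obtain ⟨v, hv⟩ := hne
  obtain ⟨t, ht⟩ := D.mem_bag v
  exact ⟨t, v, hv, ht⟩

lemma nodesMeeting_inter_nonempty (D : TreeDecomp Gr) {C C' : Set V}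
    {u v : V} (hu : u ∈ C) (hv : v ∈ C') (h : u = v ∨ Gr.Adj u v) :
    (nodesMeeting D C ∩ nodesMeeting D C').Nonempty := by
  obtain ⟨t, h1, h2⟩ : ∃ t, u ∈ D.bag t ∧ v ∈ D.bag t := by
    rcases h with rfl | hadj
    · obtain ⟨t, ht⟩ := D.mem_bag u
      exact ⟨t, ht, ht⟩
    · exact D.edge_bag hadj
  exact ⟨t, ⟨u, hu, h1⟩, ⟨v, hv, h2⟩⟩

lemma mu_ge [Fintype V] (D : TreeDecomp Gr) (t : D.ι) (M : Finset (V × V))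
    (h1 : IsInducedMatching Gr M) (h2 : Touches M (D.bag t)) : M.card ≤ mu Gr D := by
  classical
  apply le_csSup
  · refine ⟨Fintype.card (V × V), ?_⟩
    rintro x ⟨t', M', _, _, rfl⟩
    exact Finset.card_le_univ M'
  · exact ⟨t, M, h1, h2, rfl⟩

lemma one_le_mu [Fintype V] (D : TreeDecomp Gr) {u v : V} (hadj : Gr.Adj u v) :
    1 ≤ mu Gr D := by
  classical
  obtain ⟨t, ht, _⟩ := D.edge_bag hadj
  have := mu_ge D t {(u, v)} ?_ ?_
  · simpa using this
  · constructor
    · intro p hp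
      simp at hp
      subst hp
      exact hadj
    · intro p hp q hq hne
      simp at hp hq
      subst hp; subst hq
      exact absurd rfl hne
  · intro p hp
    simp at hp
    subst hp
    exact Or.inl ht

lemma mu_le_one (D : TreeDecomp Gr)
    (hclique : ∀ (t : D.ι), ∀ u ∈ D.bag t, ∀ v ∈ D.bag t, u ≠ v → Gr.Adj u v) :
    mu Gr D ≤ 1 := by
  classical
  apply csSup_le
  · obtain ⟨t⟩ := D.isTree.isConnected.nonempty
    refine ⟨0, t, ∅, ⟨by simp, by simp⟩, by intro p hp; simp at hp, by simp⟩
  · rintro n ⟨t, M, hM, hT, rfl⟩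
    by_contra hgt
    push_neg at hgt
    obtain ⟨p, hp, q, hq, hne⟩ := Finset.one_lt_card.mp hgt
    obtain ⟨⟨h11, h12, h21, h22⟩, ⟨ha11, ha12, ha21, ha22⟩⟩ := hM.2 p hp q hq hne
    rcases hT p hp with hup | hup <;> rcases hT q hq with huq | huq
    · exact ha11 (hclique t _ hup _ huq h11)
    · exact ha12 (hclique t _ hup _ huq h12)
    · exact ha21 (hclique t _ hup _ huq h21)
    · exact ha22 (hclique t _ hup _ huq h22)

lemma treeMu_le (D : TreeDecomp Gr) : treeMu Gr ≤ mu Gr D := Nat.sInf_le ⟨D, rfl⟩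

lemma treeMu_ge (m : ℕ) (D₀ : TreeDecomp Gr) (h : ∀ D : TreeDecomp Gr, m ≤ mu Gr D) :
    m ≤ treeMu Gr := by
  have hne : {n | ∃ D : TreeDecomp Gr, mu Gr D = n}.Nonempty := ⟨mu Gr D₀, D₀, rfl⟩
  obtain ⟨D, hD⟩ := Nat.sInf_mem hne
  rw [treeMu, ← hD]
  exact h D

/-- The one-node tree decomposition. -/
def trivialDecomp (Gr : SimpleGraph V) : TreeDecomp Gr where
  ι := PUnit
  fin := inferInstance
  tree := ⊥
  isTree := by
    refine ⟨⟨fun a b => ?_⟩, isAcyclic_bot⟩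
    rw [Subsingleton.elim a b]
  bag _ := Set.univ
  mem_bag v := ⟨PUnit.unit, trivial⟩
  edge_bag u w _ := ⟨PUnit.unit, trivial, trivial⟩
  coherent v := by
    haveI : Nonempty ↥{t : PUnit | v ∈ (fun _ => Set.univ) t} := ⟨⟨PUnit.unit, trivial⟩⟩
    refine ⟨fun a b => ?_⟩
    rw [Subsingleton.elim a b]

end DecompUtils

section Greedy

lemma greedy {I : Type} [DecidableEq I] (σ τ : I → I) (A : Finset I) :
    ∃ K ⊆ A, A.card ≤ 3 * K.card ∧
      ∀ i ∈ K, ∀ j ∈ K, i ≠ j → ¬((σ i = j ∨ τ i = j) ∧ (σ j = i ∨ τ j = i)) := by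
  induction A using Finset.strongInduction with
  | _ A ih =>
    rcases A.eq_empty_or_nonempty with rfl | ⟨i, hi⟩
    · exact ⟨∅, by simp, by simp, by simp⟩
    · set A' := A \ {i, σ i, τ i} with hA'
      have hss : A' ⊂ A := by
        rw [Finset.ssubset_iff_of_subset (Finset.sdiff_subset)]
        exact ⟨i, hi, by simp [hA']⟩
      obtain ⟨K', hK'A, hK'card, hK'pair⟩ := ih A' hss
      have hiK' : i ∉ K' := fun h => by simpa [hA'] using hK'A h
      refine ⟨insert i K', ?_, ?_, ?_⟩
      · intro x hx
        rcases Finset.mem_insert.mp hx with rfl | hx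
        · exact hi
        · exact Finset.sdiff_subset (hK'A hx)
      · have hsub : A ⊆ A' ∪ {i, σ i, τ i} := by
          intro x hx
          by_cases hmem : x ∈ ({i, σ i, τ i} : Finset I)
          · exact Finset.mem_union_right _ hmem
          · exact Finset.mem_union_left _ (Finset.mem_sdiff.mpr ⟨hx, hmem⟩)
        have hc3 : ({i, σ i, τ i} : Finset I).card ≤ 3 := by
          apply le_trans (Finset.card_insert_le _ _)
          have := Finset.card_insert_le (σ i) ({τ i} : Finset I)
          simp at this ⊢
          omega
        have h1 : A.card ≤ A'.card + 3 :=
          le_trans (Finset.card_le_card hsub) (le_trans (Finset.card_union_le _ _) (by omega))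
        rw [Finset.card_insert_of_notMem hiK']
        omega
      · intro a ha b hb hab
        have hmem : ∀ x ∈ K', x ∉ ({i, σ i, τ i} : Finset I) := by
          intro x hx
          have := hK'A hx
          rw [hA', Finset.mem_sdiff] at this
          exact this.2
        rcases Finset.mem_insert.mp ha with hai | ha
        · rcases Finset.mem_insert.mp hb with hbi | hb
          · exact absurd (hai.trans hbi.symm) hab
          · rintro ⟨h1, _⟩
            rw [hai] at h1
            rcases h1 with h1 | h1 <;> exact hmem b hb (by simp [← h1])
        · rcases Finset.mem_insert.mp hb with hbi | hb
          · rintro ⟨_, h2⟩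
            rw [hbi] at h2
            rcases h2 with h2 | h2 <;> exact hmem a ha (by simp [← h2])
          · exact hK'pair a ha b hb hab

end Greedy

section Gadget

variable (n s : ℕ)

abbrev Pr (n : ℕ) := Fin n × Fin n

abbrev Vg (n s : ℕ) := Pr n ⊕ (Pr n × Fin s)

/-- The sorted version of a pair. -/
def srt (p : Pr n) : Pr n := if p.1 ≤ p.2 then p else (p.2, p.1)

/-- The diagonal hub of a pair. -/
def dgn (p : Pr n) : Pr n := (p.1, p.1)

/-- `a` indexes an anchor hub of the gadget of `p`. -/
def anch (p a : Pr n) : Prop := a = dgn n p ∨ a = srt n p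

/-- Two gadgets share an anchor hub. -/
def shareAnch (p q : Pr n) : Prop := ∃ a, anch n p a ∧ anch n q a

def gadjFun : Vg n s → Vg n s → Prop
  | .inl a, .inl b => a ≠ b
  | .inl a, .inr (q, k) => (k : ℕ) = 0 ∧ anch n q a
  | .inr (q, k), .inl a => (k : ℕ) = 0 ∧ anch n q a
  | .inr (q, k), .inr (q', k') => q = q' ∧ ((k : ℕ) + 1 = (k' : ℕ) ∨ (k' : ℕ) + 1 = (k : ℕ))

/-- The chordal graph whose `2s`-th power contains the dart structure. -/
def GG : SimpleGraph (Vg n s) where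
  Adj u v := gadjFun n s u v
  symm := by
    constructor
    rintro (a | ⟨q, k⟩) (b | ⟨q', k'⟩) h <;> simp only [gadjFun] at h ⊢
    · exact h.symm
    · exact h
    · exact h
    · exact ⟨h.1.symm, h.2.symm⟩
  loopless := by
    constructor
    rintro (a | ⟨q, k⟩) h <;> simp only [gadjFun] at h
    · exact h rfl
    · omega

@[simp] lemma GG_adj_inl_inl {a b : Pr n} : (GG n s).Adj (.inl a) (.inl b) ↔ a ≠ b := Iff.rfl

@[simp] lemma GG_adj_inl_inr {a q k} :
    (GG n s).Adj (.inl a) (.inr (q, k)) ↔ (k : ℕ) = 0 ∧ anch n q a := Iff.rfl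

@[simp] lemma GG_adj_inr_inl {a q k} :
    (GG n s).Adj (.inr (q, k)) (.inl a) ↔ (k : ℕ) = 0 ∧ anch n q a := Iff.rfl

@[simp] lemma GG_adj_inr_inr {q k q' k'} :
    (GG n s).Adj (.inr (q, k)) (.inr (q', k')) ↔
      q = q' ∧ ((k : ℕ) + 1 = (k' : ℕ) ∨ (k' : ℕ) + 1 = (k : ℕ)) := Iff.rfl

variable {s}

/-- The dart of the gadget of `p`. -/
def dart (hs : 0 < s) (p : Pr n) : Vg n s := .inr (p, ⟨s - 1, by omega⟩)

/-- Walk from a gadget vertex down to an anchor hub. -/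
lemma walk_to_anchor (q a : Pr n) (ha : anch n q a) :
    ∀ (m : ℕ) (hm : m < s), ∃ w : (GG n s).Walk (.inr (q, ⟨m, hm⟩)) (.inl a), w.length = m + 1 := by
  intro m
  induction m with
  | zero =>
    intro hm
    exact ⟨Walk.cons (by simp [ha]) Walk.nil, by simp⟩
  | succ m ihm =>
    intro hm
    obtain ⟨w, hw⟩ := ihm (by omega)
    refine ⟨Walk.cons (v := .inr (q, ⟨m, by omega⟩)) (by simp) w, by simp [hw]⟩

/-- Darts of gadgets sharing an anchor are joined by a walk of length `2s`. -/
lemma dart_walk (hs : 0 < s) {p q a : Pr n} (hpa : anch n p a) (hqa : anch n q a) :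
    ∃ w : (GG n s).Walk (dart n hs p) (dart n hs q), w.length = 2 * s := by
  have hlt : s - 1 < s := by omega
  obtain ⟨w1, hw1⟩ := walk_to_anchor n p a hpa (s - 1) hlt
  obtain ⟨w2, hw2⟩ := walk_to_anchor n q a hqa (s - 1) hlt
  refine ⟨w1.append w2.reverse, ?_⟩
  refine (Walk.length_append w1 w2.reverse).trans ?_; rw [Walk.length_reverse, hw1, hw2]
  omega

lemma hadj_of_share (hs : 0 < s) {p q : Pr n} (hne : p ≠ q) {a : Pr n} (hpa : anch n p a)
    (hqa : anch n q a) : (power (GG n s) (2 * s)).Adj (dart n hs p) (dart n hs q) := by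
  obtain ⟨w, hw⟩ := dart_walk n hs hpa hqa
  rw [power, fromRel_adj]
  refine ⟨by simp [dart, hne], Or.inl ⟨⟨w⟩, ?_⟩⟩
  exact le_trans (dist_le w) (by omega)

end Gadget


section Potential

open Classical in
/-- Potential function certifying distance lower bounds to the dart of `δ`. -/
noncomputable def phi (n : ℕ) {s : ℕ} (δ : Pr n) : Vg n s → ℕ
  | .inl a => if anch n δ a then s else s + 1
  | .inr (q, k) => if q = δ then s - 1 - (k : ℕ)
      else if shareAnch n q δ then s + (k : ℕ) + 1 else s + (k : ℕ) + 2

variable (n : ℕ) {s : ℕ}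

lemma phi_lip (hs : 0 < s) (δ : Pr n) {u v : Vg n s} (h : (GG n s).Adj u v) :
    phi n δ u ≤ phi n δ v + 1 ∧ phi n δ v ≤ phi n δ u + 1 := by
  classical
  rcases u with a | ⟨q, k⟩ <;> rcases v with b | ⟨q', k'⟩
  · simp only [phi]
    split_ifs <;> omega
  · obtain ⟨hk0, hanch⟩ := (GG_adj_inl_inr n s).mp h
    by_cases hq : q' = δ
    · have hda : anch n δ a := hq ▸ hanch
      simp only [phi, if_pos hda, if_pos hq]
      omega
    · by_cases hsh : shareAnch n q' δ
      · by_cases hda : anch n δ a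
        · simp only [phi, if_pos hda, if_neg hq, if_pos hsh]; omega
        · simp only [phi, if_neg hda, if_neg hq, if_pos hsh]; omega
      · have hda : ¬ anch n δ a := fun hda => hsh ⟨a, hanch, hda⟩
        simp only [phi, if_neg hq, if_neg hsh, if_neg hda]
        omega
  · obtain ⟨hk0, hanch⟩ := (GG_adj_inr_inl n s).mp h
    by_cases hq : q = δ
    · have hda : anch n δ b := hq ▸ hanch
      simp only [phi, if_pos hda, if_pos hq]
      omega
    · by_cases hsh : shareAnch n q δ
      · by_cases hda : anch n δ b
        · simp only [phi, if_pos hda, if_neg hq, if_pos hsh]; omega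
        · simp only [phi, if_neg hda, if_neg hq, if_pos hsh]; omega
      · have hda : ¬ anch n δ b := fun hda => hsh ⟨b, hanch, hda⟩
        simp only [phi, if_neg hq, if_neg hsh, if_neg hda]
        omega
  · obtain ⟨hq, hkk⟩ := (GG_adj_inr_inr n s).mp h
    subst hq
    have hk := k.isLt
    have hk' := k'.isLt
    simp only [phi]
    split_ifs <;> omega

lemma phi_walk (δ : Pr n) (hs : 0 < s) {u v : Vg n s} (w : (GG n s).Walk u v) :
    phi n δ u ≤ phi n δ v + w.length := by
  induction w with
  | nil => simp
  | cons h p ih =>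
    have := (phi_lip n hs δ h).1
    rw [Walk.length_cons]
    omega

lemma shareAnch_self (p : Pr n) : shareAnch n p p := ⟨dgn n p, Or.inl rfl, Or.inl rfl⟩

lemma phi_dart_self (hs : 0 < s) (δ : Pr n) : phi n δ (dart n hs δ) = 0 := by
  classical
  simp [dart, phi]

lemma phi_dart_far (hs : 0 < s) {δ q : Pr n} (hnsh : ¬ shareAnch n q δ) :
    phi n δ (dart n hs q) = 2 * s + 1 := by
  classical
  have hne : q ≠ δ := fun h => hnsh (h ▸ shareAnch_self n δ)
  simp only [dart, phi, if_neg hne, if_neg hnsh]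
  omega

lemma not_hadj (hs : 0 < s) {δ q : Pr n} (hnsh : ¬ shareAnch n q δ) :
    ¬ (power (GG n s) (2 * s)).Adj (dart n hs δ) (dart n hs q) := by
  intro h
  rw [power, fromRel_adj] at h
  obtain ⟨hne, hrel⟩ := h
  have hwalk : ∃ w : (GG n s).Walk (dart n hs δ) (dart n hs q), w.length ≤ 2 * s := by
    rcases hrel with ⟨hreach, hdist⟩ | ⟨hreach, hdist⟩
    · obtain ⟨w, hw⟩ := hreach.exists_walk_length_eq_dist
      exact ⟨w, by omega⟩
    · obtain ⟨w, hw⟩ := hreach.exists_walk_length_eq_dist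
      exact ⟨w.reverse, by rw [Walk.length_reverse]; omega⟩
  obtain ⟨w, hw⟩ := hwalk
  have h1 := phi_walk n δ hs w.reverse
  rw [Walk.length_reverse, phi_dart_self n hs δ, phi_dart_far n hs hnsh] at h1
  omega

end Potential

section SrtLemmas

variable (n : ℕ)

lemma srt_swap (p : Pr n) : srt n (p.2, p.1) = srt n p := by
  unfold srt
  dsimp only
  by_cases h1 : p.1 ≤ p.2 <;> by_cases h2 : p.2 ≤ p.1
  · rw [if_pos h2, if_pos h1]
    have he : p.1 = p.2 := le_antisymm h1 h2
    exact Prod.ext he.symm he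
  · rw [if_neg h2, if_pos h1]
  · rw [if_pos h2, if_neg h1]
  · exact absurd (le_total p.1 p.2) (by simp [h1, h2])

lemma srt_ne {p : Pr n} (hp : p.1 ≠ p.2) : (srt n p).1 ≠ (srt n p).2 := by
  unfold srt
  by_cases hle : p.1 ≤ p.2
  · rw [if_pos hle]; exact hp
  · rw [if_neg hle]; exact hp.symm

lemma srt_inj {p q : Pr n} (h : srt n p = srt n q) : p = q ∨ p = (q.2, q.1) := by
  unfold srt at h
  split_ifs at h
  · exact Or.inl h
  · exact Or.inr (by rw [h])
  · refine Or.inr ?_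
    rw [← h]
  · obtain ⟨h1, h2⟩ := Prod.ext_iff.mp h
    exact Or.inl (Prod.ext h2 h1)

end SrtLemmas

section DartAdj

variable (n : ℕ) {s : ℕ}

lemma hadjA (hs : 0 < s) {i x y : Fin n} (hxy : x ≠ y) :
    (power (GG n s) (2 * s)).Adj (dart n hs (i, x)) (dart n hs (i, y)) :=
  hadj_of_share n hs (fun h => hxy (congrArg Prod.snd h)) (Or.inl rfl) (Or.inl rfl)

lemma hadjB (hs : 0 < s) {i j : Fin n} (hij : i ≠ j) :
    (power (GG n s) (2 * s)).Adj (dart n hs (i, j)) (dart n hs (j, i)) :=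
  hadj_of_share n hs (fun h => hij (congrArg Prod.fst h)) (Or.inr rfl)
    (Or.inr (srt_swap n (j, i) : srt n (i, j) = srt n (j, i)))

lemma not_hadjC (hs : 0 < s) {i x j y : Fin n} (hij : i ≠ j) (hxi : x ≠ i) (hyj : y ≠ j)
    (hno : ¬(x = j ∧ y = i)) :
    ¬ (power (GG n s) (2 * s)).Adj (dart n hs (i, x)) (dart n hs (j, y)) := by
  apply not_hadj n hs
  rintro ⟨a, hqa, hpa⟩
  have hix : (i, x).1 ≠ (i, x).2 := fun h => hxi (id h).symm
  have hjy : (j, y).1 ≠ (j, y).2 := fun h => hyj (id h).symm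
  rcases hqa with hqa | hqa <;> rcases hpa with hpa | hpa
  · have h := hqa.symm.trans hpa
    have h2 : j = i := by simpa [dgn, Prod.ext_iff] using h
    exact hij h2.symm
  · have h := hqa.symm.trans hpa
    have h1 : (srt n (i, x)).1 = (srt n (i, x)).2 := by
      rw [← h]
      simp [dgn]
    exact srt_ne n hix h1
  · have h := hpa.symm.trans hqa
    have h1 : (srt n (j, y)).1 = (srt n (j, y)).2 := by
      rw [← h]
      simp [dgn]
    exact srt_ne n hjy h1
  · have h1 : srt n (j, y) = srt n (i, x) := hqa.symm.trans hpa
    rcases srt_inj n h1 with h2 | h2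
    · have h3 := Prod.ext_iff.mp h2
      exact hij h3.1.symm
    · have h3 := Prod.ext_iff.mp h2
      exact hno ⟨h3.1.symm, h3.2⟩

end DartAdj

section GDecomp

variable (n s : ℕ)

abbrev Ig (n s : ℕ) := Unit ⊕ (Pr n × Fin s)

def tadjFun : Ig n s → Ig n s → Prop
  | .inl _, .inl _ => False
  | .inl _, .inr (_, k) => (k : ℕ) = 0
  | .inr (_, k), .inl _ => (k : ℕ) = 0
  | .inr (q, k), .inr (q', k') => q = q' ∧ ((k : ℕ) + 1 = (k' : ℕ) ∨ (k' : ℕ) + 1 = (k : ℕ))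

def TT : SimpleGraph (Ig n s) where
  Adj u v := tadjFun n s u v
  symm := by
    constructor
    rintro (⟨⟩ | ⟨q, k⟩) (⟨⟩ | ⟨q', k'⟩) h <;> simp only [tadjFun] at h ⊢
    · exact h
    · exact h
    · exact ⟨h.1.symm, h.2.symm⟩
  loopless := by
    constructor
    rintro (⟨⟩ | ⟨q, k⟩) h <;> simp only [tadjFun] at h
    omega

@[simp] lemma TT_adj_inl_inl : ¬ (TT n s).Adj (.inl ()) (.inl ()) := fun h => h

@[simp] lemma TT_adj_inl_inr {q : Pr n} {k : Fin s} :
    (TT n s).Adj (.inl ()) (.inr (q, k)) ↔ (k : ℕ) = 0 := Iff.rfl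

@[simp] lemma TT_adj_inr_inl {q : Pr n} {k : Fin s} :
    (TT n s).Adj (.inr (q, k)) (.inl ()) ↔ (k : ℕ) = 0 := Iff.rfl

@[simp] lemma TT_adj_inr_inr {q q' : Pr n} {k k' : Fin s} :
    (TT n s).Adj (.inr (q, k)) (.inr (q', k')) ↔
      q = q' ∧ ((k : ℕ) + 1 = (k' : ℕ) ∨ (k' : ℕ) + 1 = (k : ℕ)) := Iff.rfl

/-- Height of a node in the decomposition tree. -/
def ht : Ig n s → ℕ
  | .inl _ => 0
  | .inr (_, k) => (k : ℕ) + 1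

lemma ht_adj {u v : Ig n s} (h : (TT n s).Adj u v) :
    ht n s u + 1 = ht n s v ∨ ht n s v + 1 = ht n s u := by
  rcases u with ⟨⟩ | ⟨q, k⟩ <;> rcases v with ⟨⟩ | ⟨q', k'⟩
  · exact absurd h (TT_adj_inl_inl n s)
  · have := (TT_adj_inl_inr n s).mp h
    simp only [ht]
    omega
  · have := (TT_adj_inr_inl n s).mp h
    simp only [ht]
    omega
  · have := ((TT_adj_inr_inr n s).mp h).2
    simp only [ht]
    omega

lemma down_unique {x y z : Ig n s} (hxy : (TT n s).Adj x y) (hxz : (TT n s).Adj x z)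
    (hy : ht n s y + 1 = ht n s x) (hz : ht n s z + 1 = ht n s x) : y = z := by
  rcases x with ⟨⟩ | ⟨q, k⟩
  · simp only [ht] at hy
    omega
  · rcases y with ⟨⟩ | ⟨q', k'⟩ <;> rcases z with ⟨⟩ | ⟨q'', k''⟩
    · rfl
    · have h1 := (TT_adj_inr_inl n s).mp hxy
      have h2 := ((TT_adj_inr_inr n s).mp hxz).2
      simp only [ht] at hy hz
      omega
    · have h1 := (TT_adj_inr_inl n s).mp hxz
      have h2 := ((TT_adj_inr_inr n s).mp hxy).2
      simp only [ht] at hy hz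
      omega
    · obtain ⟨hq1, _⟩ := (TT_adj_inr_inr n s).mp hxy
      obtain ⟨hq2, _⟩ := (TT_adj_inr_inr n s).mp hxz
      simp only [ht] at hy hz
      have hk : k' = k'' := Fin.ext (by omega)
      rw [← hq1, ← hq2, hk]

lemma tt_acyclic : (TT n s).IsAcyclic := by
  intro v c hc
  have hvmem : v ∈ c.support := c.start_mem_support
  obtain ⟨x, hx, hmax⟩ := c.support.toFinset.exists_max_image (ht n s)
    ⟨v, List.mem_toFinset.mpr hvmem⟩
  rw [List.mem_toFinset] at hx
  have hsup' : ∀ y ∈ (c.rotate x hx).support, ht n s y ≤ ht n s x := by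
    intro y hy
    apply hmax y
    rw [List.mem_toFinset]
    rw [(c.rotate x hx).support_eq_cons] at hy
    rcases List.mem_cons.mp hy with rfl | hy
    · exact hx
    · have hperm := c.support_rotate x hx
      have := hperm.mem_iff.mp hy
      rw [c.support_eq_cons]
      exact List.mem_cons_of_mem _ this
  have main : ∀ (c' : (TT n s).Walk x x), c'.IsCycle →
      (∀ y ∈ c'.support, ht n s y ≤ ht n s x) → False := by
    intro c' hc' hsupp
    cases c' with
    | nil => simpa using hc'.three_le_length
    | @cons _ y₁ _ hadj rest =>
      cases hrr : rest.reverse with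
      | nil => exact (TT n s).loopless.irrefl x hadj
      | @cons _ z _ hadj₂ rest₂ =>
        have hy₁mem : y₁ ∈ (Walk.cons hadj rest).support := by
          rw [Walk.support_cons]
          exact List.mem_cons_of_mem _ rest.start_mem_support
        have hzmem : z ∈ (Walk.cons hadj rest).support := by
          rw [Walk.support_cons]
          apply List.mem_cons_of_mem
          have : z ∈ rest.reverse.support := by
            rw [hrr, Walk.support_cons]
            exact List.mem_cons_of_mem _ rest₂.start_mem_support
          rwa [Walk.support_reverse, List.mem_reverse] at this
        have hy₁ : ht n s y₁ + 1 = ht n s x := by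
          rcases ht_adj n s hadj with h | h
          · have := hsupp y₁ hy₁mem
            omega
          · exact h
        have hz : ht n s z + 1 = ht n s x := by
          rcases ht_adj n s hadj₂ with h | h
          · have := hsupp z hzmem
            omega
          · exact h
        have hyz : y₁ = z := down_unique n s hadj hadj₂ hy₁ hz
        have hedges : rest.edges = rest₂.edges.reverse ++ [s(x, z)] := by
          have h1 : rest.reverse.edges = s(x, z) :: rest₂.edges := by rw [hrr, Walk.edges_cons]
          rw [Walk.edges_reverse] at h1
          rw [← List.reverse_reverse rest.edges, h1, List.reverse_cons]
        have hmem : s(x, y₁) ∈ rest.edges := by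
          rw [hedges, show s(x, y₁) = s(x, z) from by rw [hyz]]
          simp
        have hnodup := hc'.edges_nodup
        rw [Walk.edges_cons] at hnodup
        exact (List.nodup_cons.mp hnodup).1 hmem
  exact main (c.rotate x hx) (hc.rotate hx) hsup'

lemma tt_connected : (TT n s).Connected := by
  have hwalk : ∀ (m : ℕ) (hm : m < s) (q : Pr n),
      Nonempty ((TT n s).Walk (.inr (q, ⟨m, hm⟩)) (.inl ())) := by
    intro m
    induction m with
    | zero => exact fun hm q => ⟨Walk.cons (by simp) Walk.nil⟩
    | succ m ihm =>
      intro hm q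
      obtain ⟨w⟩ := ihm (by omega) q
      exact ⟨Walk.cons (v := .inr (q, ⟨m, by omega⟩)) (by simp) w⟩
  have hreach : ∀ u : Ig n s, (TT n s).Reachable u (.inl ()) := by
    rintro (⟨⟩ | ⟨q, k⟩)
    · exact Reachable.refl _
    · obtain ⟨w⟩ := hwalk (k : ℕ) k.isLt q
      exact ⟨w⟩
  refine ⟨fun u v => (hreach u).trans (hreach v).symm⟩

def bagFun : Ig n s → Set (Vg n s)
  | .inl _ => Set.range Sum.inl
  | .inr (q, k) =>
      if (k : ℕ) = 0 then {Sum.inl (dgn n q), Sum.inl (srt n q), Sum.inr (q, k)}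
      else {Sum.inr (q, ⟨(k : ℕ) - 1, lt_of_le_of_lt (Nat.sub_le _ _) k.isLt⟩), Sum.inr (q, k)}

lemma bag_clique : ∀ t : Ig n s, ∀ u ∈ bagFun n s t, ∀ v ∈ bagFun n s t, u ≠ v → (GG n s).Adj u v := by
  rintro (⟨⟩ | ⟨q, k⟩) u hu v hv hne
  · obtain ⟨a, rfl⟩ := hu
    obtain ⟨b, rfl⟩ := hv
    exact fun h => hne (congrArg Sum.inl h)
  · by_cases hk : (k : ℕ) = 0
    · simp only [bagFun, if_pos hk] at hu hv
      rcases hu with rfl | rfl | rfl <;> rcases hv with rfl | rfl | rfl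
      · exact fun h => hne (congrArg Sum.inl h)
      · exact fun h => hne (congrArg Sum.inl h)
      · exact ⟨hk, Or.inl rfl⟩
      · exact fun h => hne (congrArg Sum.inl h)
      · exact fun h => hne (congrArg Sum.inl h)
      · exact ⟨hk, Or.inr rfl⟩
      · exact ⟨hk, Or.inl rfl⟩
      · exact ⟨hk, Or.inr rfl⟩
      · exact absurd rfl hne
    · simp only [bagFun, if_neg hk] at hu hv
      rcases hu with rfl | rfl <;> rcases hv with rfl | rfl
      · exact absurd rfl hne
      · exact ⟨rfl, Or.inl (show ((k : ℕ) - 1) + 1 = (k : ℕ) by omega)⟩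
      · exact ⟨rfl, Or.inr (show ((k : ℕ) - 1) + 1 = (k : ℕ) by omega)⟩
      · exact absurd rfl hne

/-- The clique-tree decomposition of `GG`. -/
def decompG : TreeDecomp (GG n s) where
  ι := Ig n s
  fin := inferInstance
  tree := TT n s
  isTree := ⟨tt_connected n s, tt_acyclic n s⟩
  bag := bagFun n s
  mem_bag := by
    rintro (a | ⟨q, k⟩)
    · exact ⟨.inl (), a, rfl⟩
    · refine ⟨.inr (q, k), ?_⟩
      by_cases hk : (k : ℕ) = 0 <;> simp [bagFun, hk]
  edge_bag := by
    rintro (a | ⟨q, k⟩) (b | ⟨q', k'⟩) hadj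
    · exact ⟨.inl (), ⟨a, rfl⟩, ⟨b, rfl⟩⟩
    · obtain ⟨hk0, hanch⟩ := hadj
      refine ⟨.inr (q', k'), ?_, ?_⟩ <;> simp only [bagFun, if_pos hk0]
      · rcases hanch with rfl | rfl
        · exact Or.inl rfl
        · exact Or.inr (Or.inl rfl)
      · exact Or.inr (Or.inr rfl)
    · obtain ⟨hk0, hanch⟩ := hadj
      refine ⟨.inr (q, k), ?_, ?_⟩ <;> simp only [bagFun, if_pos hk0]
      · exact Or.inr (Or.inr rfl)
      · rcases hanch with rfl | rfl
        · exact Or.inl rfl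
        · exact Or.inr (Or.inl rfl)
    · obtain ⟨hq, hkk⟩ := hadj
      subst hq
      rcases hkk with hkk | hkk
      · refine ⟨.inr (q, k'), ?_, ?_⟩ <;> simp only [bagFun, if_neg (by omega : ¬ (k' : ℕ) = 0)]
        · left
          congr 2
          simp only [Fin.ext_iff, Fin.val_mk]
          omega
        · exact Or.inr rfl
      · refine ⟨.inr (q, k), ?_, ?_⟩ <;> simp only [bagFun, if_neg (by omega : ¬ (k : ℕ) = 0)]
        · exact Or.inr rfl
        · left
          congr 2
          simp only [Fin.ext_iff, Fin.val_mk]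
          omega
  coherent := by
    rintro (a | ⟨q, k⟩)
    · apply induce_connected_of_setConn
      · exact ⟨.inl (), ⟨a, rfl⟩⟩
      · have hstep : ∀ t ∈ {t : Ig n s | Sum.inl a ∈ bagFun n s t},
            ReachIn (TT n s) {t : Ig n s | Sum.inl a ∈ bagFun n s t} t (.inl ()) := by
          rintro (⟨⟩ | ⟨q, k⟩) ht
          · exact ⟨Walk.nil, by rintro x hx; simp at hx; subst hx; exact ht⟩
          · have hcenter : Sum.inl a ∈ bagFun n s (.inl () : Ig n s) := ⟨a, rfl⟩
            have hk0 : (k : ℕ) = 0 := by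
              by_contra hk
              simp only [Set.mem_setOf_eq, bagFun, if_neg hk] at ht
              rcases ht with h | h <;> exact absurd h (by simp)
            refine ⟨Walk.cons (by simp [hk0]) Walk.nil, ?_⟩
            rintro x hx
            simp at hx
            rcases hx with rfl | rfl
            · exact ht
            · exact hcenter
        intro u hu v hv
        exact (hstep u hu).trans (hstep v hv).symm
    · apply induce_connected_of_setConn
      · refine ⟨.inr (q, k), ?_⟩
        by_cases hk : (k : ℕ) = 0 <;> simp [bagFun, hk]
      · have hchar : ∀ t ∈ {t : Ig n s | Sum.inr (q, k) ∈ bagFun n s t},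
            t = .inr (q, k) ∨ ∃ (h1 : (k : ℕ) + 1 < s), t = .inr (q, ⟨(k : ℕ) + 1, h1⟩) := by
          rintro (⟨⟩ | ⟨q', k'⟩) ht
          · obtain ⟨b, hb⟩ := ht
            exact absurd hb (by simp)
          · simp only [Set.mem_setOf_eq, bagFun] at ht
            split_ifs at ht with hk'
            · rcases ht with h | h | h
              · exact absurd h (by simp)
              · exact absurd h (by simp)
              · exact Or.inl (congrArg Sum.inr (Sum.inr_injective (Set.mem_singleton_iff.mp h)).symm)
            · rcases ht with h | h
              · right
                have h1 := Sum.inr_injective (Set.mem_singleton_iff.mp h)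
                have hq : q = q' := congrArg Prod.fst h1
                have hkval : (k : ℕ) = (k' : ℕ) - 1 := congrArg (fun p => ((p.2 : Fin s) : ℕ)) h1
                have hlt : (k : ℕ) + 1 < s := by
                  have := k'.isLt
                  omega
                refine ⟨hlt, ?_⟩
                subst hq
                congr 2
                simp only [Fin.ext_iff, Fin.val_mk]
                omega
              · exact Or.inl (congrArg Sum.inr (Sum.inr_injective (Set.mem_singleton_iff.mp h)).symm)
        have hself : Sum.inr (q, k) ∈ bagFun n s (.inr (q, k) : Ig n s) := by
          by_cases hk : (k : ℕ) = 0 <;> simp [bagFun, hk]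
        have hstep : ∀ t ∈ {t : Ig n s | Sum.inr (q, k) ∈ bagFun n s t},
            ReachIn (TT n s) {t : Ig n s | Sum.inr (q, k) ∈ bagFun n s t} t (.inr (q, k)) := by
          intro t ht
          rcases hchar t ht with rfl | ⟨h1, rfl⟩
          · exact ⟨Walk.nil, by rintro x hx; simp at hx; subst hx; exact ht⟩
          · refine ⟨Walk.cons (by simp) Walk.nil, ?_⟩
            rintro x hx
            simp at hx
            rcases hx with rfl | rfl
            · exact ht
            · exact hself
        intro u hu v hv
        exact (hstep u hu).trans (hstep v hv).symm

end GDecomp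

section Assembly

variable (n s : ℕ)

lemma treeMu_GG (hn : 2 ≤ n) (hs : 0 < s) : treeMu (GG n s) = 1 := by
  have hedge : (GG n s).Adj (.inl ((⟨0, by omega⟩ : Fin n), ⟨0, by omega⟩))
      (.inl (⟨1, by omega⟩, ⟨0, by omega⟩)) := by
    intro h
    have := Prod.ext_iff.mp h
    have h1 := congrArg Fin.val this.1
    simp at h1
  apply le_antisymm
  · exact le_trans (treeMu_le (decompG n s)) (mu_le_one (decompG n s) (bag_clique n s))
  · exact treeMu_ge 1 (trivialDecomp _) (fun D => one_le_mu D hedge)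

lemma mu_H_lower (hs : 0 < s) (hn : 3 ≤ n) (m : ℕ) (hnm : n = 3 * m)
    (D : TreeDecomp (power (GG n s) (2 * s))) : m ≤ mu (power (GG n s) (2 * s)) D := by
  classical
  -- the dart "cliques"
  set C : Fin n → Set (Vg n s) := fun i => {v | ∃ j : Fin n, j ≠ i ∧ v = dart n hs (i, j)}
    with hC
  have hCmem : ∀ i j : Fin n, j ≠ i → dart n hs (i, j) ∈ C i := by
    intro i j hji
    exact ⟨j, hji, rfl⟩
  have hother : ∀ i : Fin n, ∃ j : Fin n, j ≠ i := by
    intro i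
    have hne : ((Finset.univ : Finset (Fin n)) \ {i}).Nonempty := by
      rw [← Finset.card_pos, Finset.card_sdiff_of_subset (by simp)]
      simp only [Finset.card_univ, Fintype.card_fin, Finset.card_singleton]
      omega
    obtain ⟨j, hj⟩ := hne
    rw [Finset.mem_sdiff] at hj
    exact ⟨j, by simpa using hj.2⟩
  have hCconn : ∀ i, SetConn D.tree (nodesMeeting D (C i)) := by
    intro i
    apply nodesMeeting_setConn
    rintro u ⟨j, hji, rfl⟩ v ⟨j', hj'i, rfl⟩
    rcases eq_or_ne j j' with rfl | hjj
    · exact Or.inl rfl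
    · exact Or.inr (hadjA n hs hjj)
  have hCpair : ∀ i i' : Fin n,
      (nodesMeeting D (C i) ∩ nodesMeeting D (C i')).Nonempty := by
    intro i i'
    rcases eq_or_ne i i' with rfl | hii
    · obtain ⟨j, hj⟩ := hother i
      obtain ⟨t, ht⟩ := nodesMeeting_nonempty D ⟨dart n hs (i, j), hCmem i j hj⟩
      exact ⟨t, ht, ht⟩
    · exact nodesMeeting_inter_nonempty D (hCmem i i' (Ne.symm hii)) (hCmem i' i hii)
        (Or.inr (hadjB n hs hii))
  haveI : Nonempty D.ι := D.isTree.isConnected.nonempty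
  obtain ⟨t, ht⟩ := hellyList D.isTree
    ((List.finRange n).map (fun i => nodesMeeting D (C i)))
    (by
      intro S hS
      rw [List.mem_map] at hS
      obtain ⟨i, _, rfl⟩ := hS
      exact hCconn i)
    (by
      intro S hS S' hS'
      rw [List.mem_map] at hS hS'
      obtain ⟨i, _, rfl⟩ := hS
      obtain ⟨i', _, rfl⟩ := hS'
      exact hCpair i i')
  have hsel : ∀ i : Fin n, ∃ j : Fin n, j ≠ i ∧ dart n hs (i, j) ∈ D.bag t := by
    intro i
    have hmem : nodesMeeting D (C i) ∈
        (List.finRange n).map (fun i => nodesMeeting D (C i)) := by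
      rw [List.mem_map]
      exact ⟨i, List.mem_finRange i, rfl⟩
    obtain ⟨v, ⟨j, hji, rfl⟩, hv⟩ := ht _ hmem
    exact ⟨j, hji, hv⟩
  choose σ hσne hσbag using hsel
  have hτex : ∀ i : Fin n, ∃ j : Fin n, j ≠ i ∧ j ≠ σ i := by
    intro i
    have hsub : ({i, σ i} : Finset (Fin n)).card ≤ 2 := by
      apply le_trans (Finset.card_insert_le _ _)
      simp
    have hne : ((Finset.univ : Finset (Fin n)) \ {i, σ i}).Nonempty := by
      rw [← Finset.card_pos, Finset.card_sdiff_of_subset (by simp [Finset.subset_univ])]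
      simp only [Finset.card_univ, Fintype.card_fin]
      omega
    obtain ⟨j, hj⟩ := hne
    rw [Finset.mem_sdiff, Finset.mem_insert, Finset.mem_singleton] at hj
    push_neg at hj
    exact ⟨j, hj.2.1, hj.2.2⟩
  choose τ hτi hτσ using hτex
  obtain ⟨K, hKuniv, hKcard, hKpair⟩ := greedy σ τ (Finset.univ : Finset (Fin n))
  have hKm : m ≤ K.card := by
    rw [Finset.card_univ, Fintype.card_fin] at hKcard
    omega
  obtain ⟨K', hK'K, hK'card⟩ := Finset.exists_subset_card_eq hKm
  set M : Finset (Vg n s × Vg n s) :=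
    K'.image (fun i => (dart n hs (i, σ i), dart n hs (i, τ i))) with hM
  have hpair_inj : ∀ i ∈ K', ∀ j ∈ K',
      (dart n hs (i, σ i), dart n hs (i, τ i)) = (dart n hs (j, σ j), dart n hs (j, τ j)) →
        i = j := by
    intro i _ j _ h
    have h1 := congrArg Prod.fst h
    have h2 := Sum.inr_injective h1
    exact congrArg Prod.fst (Prod.ext_iff.mp h2).1
  have hMcard : M.card = m := by
    rw [hM, Finset.card_image_of_injOn hpair_inj]
    exact hK'card
  have hd_ne : ∀ (i j : Fin n) (x y : Fin n), i ≠ j → dart n hs (i, x) ≠ dart n hs (j, y) := by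
    intro i j x y hij h
    exact hij (congrArg (fun z => z.1.1) (Sum.inr_injective h))
  have hmatch : IsInducedMatching (power (GG n s) (2 * s)) M := by
    constructor
    · intro p hp
      rw [hM, Finset.mem_image] at hp
      obtain ⟨i, _, rfl⟩ := hp
      exact hadjA n hs (Ne.symm (hτσ i))
    · intro p hp q hq hne
      rw [hM, Finset.mem_image] at hp hq
      obtain ⟨i, hiK, rfl⟩ := hp
      obtain ⟨j, hjK, rfl⟩ := hq
      have hij : i ≠ j := fun h => hne (by rw [h])
      have hg := hKpair i (hK'K hiK) j (hK'K hjK) hij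
      have hnab : ∀ x y : Fin n, (x = σ i ∨ x = τ i) → (y = σ j ∨ y = τ j) →
          ¬(x = j ∧ y = i) := by
        rintro x y hx hy ⟨hxj, hyi⟩
        apply hg
        constructor
        · rcases hx with rfl | rfl
          · exact Or.inl hxj
          · exact Or.inr hxj
        · rcases hy with rfl | rfl
          · exact Or.inl hyi
          · exact Or.inr hyi
      refine ⟨⟨hd_ne i j _ _ hij, hd_ne i j _ _ hij, hd_ne i j _ _ hij, hd_ne i j _ _ hij⟩,
        ⟨?_, ?_, ?_, ?_⟩⟩
      · exact not_hadjC n hs hij (hσne i) (hσne j) (hnab _ _ (Or.inl rfl) (Or.inl rfl))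
      · exact not_hadjC n hs hij (hσne i) (hτi j) (hnab _ _ (Or.inl rfl) (Or.inr rfl))
      · exact not_hadjC n hs hij (hτi i) (hσne j) (hnab _ _ (Or.inr rfl) (Or.inl rfl))
      · exact not_hadjC n hs hij (hτi i) (hτi j) (hnab _ _ (Or.inr rfl) (Or.inr rfl))
  have htouch : Touches M (D.bag t) := by
    intro p hp
    rw [hM, Finset.mem_image] at hp
    obtain ⟨i, _, rfl⟩ := hp
    exact Or.inl (hσbag i)
  calc m = M.card := hMcard.symm
    _ ≤ mu (power (GG n s) (2 * s)) D := mu_ge D t M hmatch htouch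

end Assembly


/-- for even positive `r`, no function `f : ℕ → ℕ` satisfies
tree-μ(G^r) ≤ f(tree-μ(G)) for all finite graphs `G`. -/
theorem stmt10 (r : ℕ) (hr : 0 < r) (heven : Even r) (f : ℕ → ℕ) :
    ∃ (V : Type) (_ : Fintype V) (G : SimpleGraph V),
      f (treeMu G) < treeMu (power G r) := by
  obtain ⟨c, hc⟩ := heven
  have hrs : r = 2 * c := by omega
  have hs : 0 < c := by omega
  subst hrs
  set m := f 1 + 1 with hm
  set n := 3 * m with hn
  refine ⟨Vg n c, inferInstance, GG n c, ?_⟩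
  have h1 : treeMu (GG n c) = 1 := treeMu_GG n c (by omega) hs
  rw [h1]
  have hlow : m ≤ treeMu (power (GG n c) (2 * c)) :=
    treeMu_ge m (trivialDecomp _)
      (fun D => mu_H_lower n c hs (by omega) m rfl D)
  omega

end Paper
end

section
/- Let G be a finite simple graph and let H be an induced minor of G, i.e., a graph obtainable (up to isomorphism) from G by a finite sequence of vertex deletions and edge contractions. Then tree-μ(H) ≤ tree-μ(G). In particular, for every vertex v of G, tree-μ(G − v) ≤ tree-μ(G), and for every edge uv of G, the graph G/uv obtained by contracting uv (identifying u and v into a single vertex adjacent to all former neighbors of u or v, with no loops or multiple edges) satisfies tree-μ(G/uv) ≤ tree-μ(G). -/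
open SimpleGraph

namespace Paper

/-- `H` is an induced minor of `G`: there is a family of nonempty, pairwise
disjoint, connected branch sets in `G`, one for each vertex of `H`, such that
distinct vertices of `H` are adjacent iff there is an edge of `G` between the
corresponding branch sets. (This is the standard model characterization of
being obtainable from `G` by vertex deletions and edge contractions.) -/
def IsInducedMinor {V W : Type} (G : SimpleGraph V) (H : SimpleGraph W) : Prop :=
  ∃ φ : W → Set V,
    (∀ w, (φ w).Nonempty) ∧
    (∀ w, (G.induce (φ w)).Connected) ∧
    (∀ w₁ w₂, w₁ ≠ w₂ → Disjoint (φ w₁) (φ w₂)) ∧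
    (∀ w₁ w₂, w₁ ≠ w₂ →
      (H.Adj w₁ w₂ ↔ ∃ u ∈ φ w₁, ∃ v ∈ φ w₂, G.Adj u v))

/-- The graph obtained from `G` by contracting the edge `uv` (identifying `u`
and `v` into the vertex `u`, which becomes adjacent to all former neighbors of
`u` or `v`; no loops or multiple edges). -/
def contractEdge {V : Type} (G : SimpleGraph V) (u v : V) :
    SimpleGraph {w : V // w ≠ v} :=
  SimpleGraph.fromRel (fun a b =>
    G.Adj a.1 b.1 ∨ (a.1 = u ∧ G.Adj v b.1) ∨ (b.1 = u ∧ G.Adj a.1 v))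

/-!
Let `φ` be a model of `H` in `G` and take a tree decomposition of `G` attaining `tree-μ(G)`.
Putting `w` into every bag that meets `φ w` gives a tree decomposition of `H`, coherent because
the branch sets are connected. An induced matching of `H` touching a bag lifts edge by edge to
one of `G` touching the same bag: if `x ∈ φ w` lies in the bag and `ww'` is a matching edge,
then `x` has a neighbour in `φ w ∪ φ w'` (inside `φ w` by connectivity, unless `φ w = {x}`).
Disjointness of the branch sets and the induced-minor condition keep the lifted edges pairwise
disjoint and non-adjacent. Vertex deletion and edge contraction are special induced minors.
-/

section Connectivity

variable {V : Type*} {G : SimpleGraph V}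

lemma induce_connected_of_forall_eq_or_adj {s : Set V} {c : V} (hc : c ∈ s)
    (h : ∀ x ∈ s, x = c ∨ G.Adj c x) : (G.induce s).Connected := by
  rw [connected_iff_exists_forall_reachable]
  refine ⟨⟨c, hc⟩, fun ⟨x, hx⟩ => ?_⟩
  rcases h x hx with rfl | hcx
  · rfl
  · exact Adj.reachable (induce_adj.mpr hcx)

lemma exists_adj_of_induce_connected {s t : Set V} (hs : (G.induce s).Connected)
    {x : V} (hx : x ∈ s) (hst : ∃ a ∈ s, ∃ b ∈ t, G.Adj a b) :
    ∃ y ∈ s ∪ t, G.Adj x y := by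
  obtain ⟨a, ha, b, hb, hab⟩ := hst
  by_cases hxa : x = a
  · exact ⟨b, Or.inr hb, hxa ▸ hab⟩
  · obtain ⟨p⟩ := hs.preconnected ⟨x, hx⟩ ⟨a, ha⟩
    have hp : ¬ p.Nil := Walk.not_nil_of_ne fun h => hxa (congrArg Subtype.val h)
    exact ⟨p.snd, Or.inl p.snd.2, Walk.adj_snd hp⟩

lemma induce_biUnion_connected {ι : Type*} {T : SimpleGraph ι} {s : Set V}
    (hs : (G.induce s).Connected) {A : V → Set ι} (hA : ∀ v, (T.induce (A v)).Connected)
    (hAadj : ∀ ⦃u v⦄, G.Adj u v → (A u ∩ A v).Nonempty) :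
    (T.induce (⋃ v ∈ s, A v)).Connected := by
  have hsub : ∀ u ∈ s, A u ⊆ ⋃ v ∈ s, A v := fun u hu => Set.subset_biUnion_of_mem hu
  have reach_of_mem : ∀ {u} (hu : u ∈ s) {a b : ι} (ha : a ∈ A u) (hb : b ∈ A u),
      (T.induce (⋃ v ∈ s, A v)).Reachable ⟨a, hsub u hu ha⟩ ⟨b, hsub u hu hb⟩ :=
    fun hu _ _ ha hb =>
      ((hA _).preconnected ⟨_, ha⟩ ⟨_, hb⟩).map (induceHomOfLE T (hsub _ hu)).toHom
  have reach_of_walk : ∀ (u v : s) (_ : (G.induce s).Walk u v) {a b : ι} (ha : a ∈ A u)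
      (hb : b ∈ A v),
      (T.induce (⋃ v ∈ s, A v)).Reachable ⟨a, hsub u u.2 ha⟩ ⟨b, hsub v v.2 hb⟩ := by
    intro u v p
    induction p with
    | nil => exact reach_of_mem (Subtype.prop _)
    | cons huw _ ih =>
      intro a b ha hb
      obtain ⟨c, hcu, hcw⟩ := hAadj (induce_adj.mp huw)
      exact (reach_of_mem (Subtype.prop _) ha hcu).trans (ih hcw hb)
  obtain ⟨u⟩ := hs.nonempty
  obtain ⟨⟨a, ha⟩⟩ := (hA u).nonempty
  rw [connected_iff_exists_forall_reachable]
  refine ⟨⟨a, hsub u u.2 ha⟩, fun ⟨b, hb⟩ => ?_⟩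
  obtain ⟨v, hv, hbv⟩ := Set.mem_iUnion₂.mp hb
  obtain ⟨p⟩ := hs.preconnected u ⟨v, hv⟩
  exact reach_of_walk u ⟨v, hv⟩ p ha hbv

end Connectivity

namespace TreeDecomp

variable {V W : Type} {G : SimpleGraph V} {H : SimpleGraph W}

def single (G : SimpleGraph V) : TreeDecomp G where
  ι := Unit
  fin := inferInstance
  tree := ⊥
  isTree := ⟨Connected.of_subsingleton, isAcyclic_bot⟩
  bag _ := Set.univ
  mem_bag _ := ⟨(), Set.mem_univ _⟩
  edge_bag _ _ _ := ⟨(), Set.mem_univ _, Set.mem_univ _⟩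
  coherent _ := (connected_iff_exists_forall_reachable _).mpr
    ⟨⟨(), Set.mem_univ _⟩, fun _ => Reachable.of_subsingleton⟩

def comap (D : TreeDecomp G) (φ : W → Set V) (hne : ∀ w, (φ w).Nonempty)
    (hconn : ∀ w, (G.induce (φ w)).Connected)
    (hadj : ∀ ⦃w₁ w₂⦄, H.Adj w₁ w₂ → ∃ x ∈ φ w₁, ∃ y ∈ φ w₂, G.Adj x y) : TreeDecomp H where
  ι := D.ι
  fin := D.fin
  tree := D.tree
  isTree := D.isTree
  bag t := {w | ∃ x ∈ φ w, x ∈ D.bag t}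
  mem_bag w := by
    obtain ⟨x, hx⟩ := hne w
    obtain ⟨t, ht⟩ := D.mem_bag x
    exact ⟨t, x, hx, ht⟩
  edge_bag w₁ w₂ hw := by
    obtain ⟨x, hx, y, hy, hxy⟩ := hadj hw
    obtain ⟨t, hxt, hyt⟩ := D.edge_bag hxy
    exact ⟨t, ⟨x, hx, hxt⟩, ⟨y, hy, hyt⟩⟩
  coherent w := by
    have hbags : {t | ∃ x ∈ φ w, x ∈ D.bag t} = ⋃ x ∈ φ w, {t | x ∈ D.bag t} := by
      ext t
      simp only [Set.mem_ofPred_eq, Set.mem_iUnion, exists_prop]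
    exact hbags ▸ induce_biUnion_connected (hconn w) D.coherent fun _ _ hxy => D.edge_bag hxy

end TreeDecomp

section Mu

variable {V W : Type} {G : SimpleGraph V} {H : SimpleGraph W}

lemma bddAbove_mu [Finite V] (D : TreeDecomp G) :
    BddAbove {n | ∃ (t : D.ι) (M : Finset (V × V)),
      IsInducedMatching G M ∧ Touches M (D.bag t) ∧ M.card = n} := by
  have := Fintype.ofFinite V
  refine ⟨Fintype.card (V × V), ?_⟩
  rintro _ ⟨_, M, -, -, rfl⟩
  exact M.card_le_univ

lemma mu_le_mu [Finite V] {D : TreeDecomp G} {D' : TreeDecomp H}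
    (h : ∀ (t' : D'.ι) (M' : Finset (W × W)), IsInducedMatching H M' → Touches M' (D'.bag t') →
      ∃ (t : D.ι) (M : Finset (V × V)), IsInducedMatching G M ∧ Touches M (D.bag t) ∧
        M.card = M'.card) :
    mu H D' ≤ mu G D :=
  csSup_le' fun _ ⟨t', M', hM', hT', hcard⟩ => le_csSup (bddAbove_mu D) (hcard ▸ h t' M' hM' hT')

lemma exists_mu_eq_treeMu (G : SimpleGraph V) : ∃ D : TreeDecomp G, mu G D = treeMu G :=
  Nat.sInf_mem (s := {n | ∃ D : TreeDecomp G, mu G D = n}) ⟨_, TreeDecomp.single G, rfl⟩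

lemma treeMu_le_mu (D : TreeDecomp G) : treeMu G ≤ mu G D :=
  Nat.sInf_le ⟨D, rfl⟩

end Mu

section InducedMatching

variable {V W : Type} {G : SimpleGraph V} {H : SimpleGraph W}

lemma IsInducedMatching.ne_and_not_adj {M : Finset (V × V)} (hM : IsInducedMatching G M)
    {p q : V × V} (hp : p ∈ M) (hq : q ∈ M) (hpq : p ≠ q) {a b : V} (ha : a = p.1 ∨ a = p.2)
    (hb : b = q.1 ∨ b = q.2) : a ≠ b ∧ ¬ G.Adj a b := by
  obtain ⟨⟨h11, h12, h21, h22⟩, n11, n12, n21, n22⟩ := hM.2 p hp q hq hpq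
  rcases ha with rfl | rfl <;> rcases hb with rfl | rfl
  exacts [⟨h11, n11⟩, ⟨h12, n12⟩, ⟨h21, n21⟩, ⟨h22, n22⟩]

variable {φ : W → Set V}

lemma IsInducedMatching.ne_and_not_adj_of_mem_branch
    (hdisj : ∀ w₁ w₂, w₁ ≠ w₂ → Disjoint (φ w₁) (φ w₂))
    (hind : ∀ w₁ w₂, w₁ ≠ w₂ → (∃ x ∈ φ w₁, ∃ y ∈ φ w₂, G.Adj x y) → H.Adj w₁ w₂)
    {M : Finset (W × W)} (hM : IsInducedMatching H M) {p q : W × W} (hp : p ∈ M) (hq : q ∈ M)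
    (hpq : p ≠ q) {x y : V} (hx : x ∈ φ p.1 ∪ φ p.2) (hy : y ∈ φ q.1 ∪ φ q.2) :
    x ≠ y ∧ ¬ G.Adj x y := by
  obtain ⟨a, ha, hxa⟩ : ∃ a, (a = p.1 ∨ a = p.2) ∧ x ∈ φ a := by
    rcases hx with hx | hx
    exacts [⟨_, .inl rfl, hx⟩, ⟨_, .inr rfl, hx⟩]
  obtain ⟨b, hb, hyb⟩ : ∃ b, (b = q.1 ∨ b = q.2) ∧ y ∈ φ b := by
    rcases hy with hy | hy
    exacts [⟨_, .inl rfl, hy⟩, ⟨_, .inr rfl, hy⟩]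
  obtain ⟨hab, hnab⟩ := hM.ne_and_not_adj hp hq hpq ha hb
  exact ⟨fun hxy => Set.disjoint_left.mp (hdisj a b hab) hxa (hxy ▸ hyb),
    fun hxy => hnab (hind a b hab ⟨x, hxa, y, hyb, hxy⟩)⟩

lemma IsInducedMatching.image_of_mem_branch [DecidableEq V]
    (hdisj : ∀ w₁ w₂, w₁ ≠ w₂ → Disjoint (φ w₁) (φ w₂))
    (hind : ∀ w₁ w₂, w₁ ≠ w₂ → (∃ x ∈ φ w₁, ∃ y ∈ φ w₂, G.Adj x y) → H.Adj w₁ w₂)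
    {M : Finset (W × W)} (hM : IsInducedMatching H M) {f : W × W → V × V}
    (hf : ∀ p ∈ M, G.Adj (f p).1 (f p).2 ∧ (f p).1 ∈ φ p.1 ∪ φ p.2 ∧ (f p).2 ∈ φ p.1 ∪ φ p.2) :
    IsInducedMatching G (M.image f) ∧ (M.image f).card = M.card := by
  have cross {p q} (hp : p ∈ M) (hq : q ∈ M) (hpq : p ≠ q) {x y : V} :=
    hM.ne_and_not_adj_of_mem_branch hdisj hind hp hq hpq (x := x) (y := y)
  have hinj : Set.InjOn f M := fun p hp q hq hfpq => by_contra fun hpq =>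
    (cross hp hq hpq (hf p hp).2.1 (hfpq ▸ (hf q hq).2.1)).1 rfl
  refine ⟨⟨?_, ?_⟩, Finset.card_image_of_injOn hinj⟩
  · simp only [Finset.forall_mem_image]
    exact fun p hp => (hf p hp).1
  · simp only [Finset.forall_mem_image]
    intro p hp q hq hne
    have hpq : p ≠ q := fun h => hne (h ▸ rfl)
    obtain ⟨-, hp1, hp2⟩ := hf p hp
    obtain ⟨-, hq1, hq2⟩ := hf q hq
    exact ⟨⟨(cross hp hq hpq hp1 hq1).1, (cross hp hq hpq hp1 hq2).1,
      (cross hp hq hpq hp2 hq1).1, (cross hp hq hpq hp2 hq2).1⟩,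
      (cross hp hq hpq hp1 hq1).2, (cross hp hq hpq hp1 hq2).2,
      (cross hp hq hpq hp2 hq1).2, (cross hp hq hpq hp2 hq2).2⟩

end InducedMatching

section InducedMinor

variable {V W : Type} {G : SimpleGraph V} {H : SimpleGraph W}

lemma mu_comap_le [Finite V] (D : TreeDecomp G) {φ : W → Set V} (hne : ∀ w, (φ w).Nonempty)
    (hconn : ∀ w, (G.induce (φ w)).Connected)
    (hadj : ∀ ⦃w₁ w₂⦄, H.Adj w₁ w₂ → ∃ x ∈ φ w₁, ∃ y ∈ φ w₂, G.Adj x y)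
    (hdisj : ∀ w₁ w₂, w₁ ≠ w₂ → Disjoint (φ w₁) (φ w₂))
    (hind : ∀ w₁ w₂, w₁ ≠ w₂ → (∃ x ∈ φ w₁, ∃ y ∈ φ w₂, G.Adj x y) → H.Adj w₁ w₂) :
    mu H (D.comap φ hne hconn hadj) ≤ mu G D := by
  classical
  refine mu_le_mu fun t M hM hT => ?_
  obtain rfl | ⟨p₀, -⟩ := M.eq_empty_or_nonempty
  · exact ⟨t, ∅, ⟨by simp, by simp⟩, by simp [Touches], rfl⟩
  have : Nonempty V := ⟨(hne p₀.1).some⟩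
  have hlift : ∀ p ∈ M, ∃ e : V × V, G.Adj e.1 e.2 ∧ e.1 ∈ D.bag t ∧
      e.1 ∈ φ p.1 ∪ φ p.2 ∧ e.2 ∈ φ p.1 ∪ φ p.2 := by
    intro p hp
    have hpadj := hM.1 p hp
    rcases hT p hp with ⟨x, hx, hxt⟩ | ⟨x, hx, hxt⟩
    · obtain ⟨y, hy, hxy⟩ := exists_adj_of_induce_connected (hconn _) hx (hadj hpadj)
      exact ⟨(x, y), hxy, hxt, .inl hx, hy⟩
    · obtain ⟨y, hy, hxy⟩ := exists_adj_of_induce_connected (hconn _) hx (hadj hpadj.symm)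
      exact ⟨(x, y), hxy, hxt, .inr hx, Set.union_comm _ _ ▸ hy⟩
  choose! f hf using hlift
  obtain ⟨hfM, hcard⟩ :=
    hM.image_of_mem_branch hdisj hind fun p hp => ⟨(hf p hp).1, (hf p hp).2.2⟩
  refine ⟨t, M.image f, hfM, ?_, hcard⟩
  simp only [Touches, Finset.forall_mem_image]
  exact fun p hp => .inl (hf p hp).2.1

theorem IsInducedMinor.treeMu_le [Finite V] (h : IsInducedMinor G H) :
    treeMu H ≤ treeMu G := by
  obtain ⟨φ, hne, hconn, hdisj, hφ⟩ := h
  have hadj : ∀ ⦃w₁ w₂⦄, H.Adj w₁ w₂ → ∃ x ∈ φ w₁, ∃ y ∈ φ w₂, G.Adj x y :=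
    fun w₁ w₂ h => (hφ w₁ w₂ h.ne).mp h
  obtain ⟨D, hD⟩ := exists_mu_eq_treeMu G
  calc treeMu H ≤ mu H (D.comap φ hne hconn hadj) := treeMu_le_mu _
    _ ≤ mu G D := mu_comap_le D hne hconn hadj hdisj fun w₁ w₂ h => (hφ w₁ w₂ h).mpr
    _ = treeMu G := hD

lemma isInducedMinor_induce (G : SimpleGraph V) (s : Set V) : IsInducedMinor G (G.induce s) := by
  refine ⟨fun w => {w.1}, fun w => Set.singleton_nonempty _,
    fun w => induce_connected_of_forall_eq_or_adj rfl fun x hx => .inl hx,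
    fun w₁ w₂ h => Set.disjoint_singleton.mpr (Subtype.coe_ne_coe.mpr h), fun w₁ w₂ _ => ?_⟩
  simp

lemma isInducedMinor_contractEdge {u v : V} (huv : G.Adj u v) :
    IsInducedMinor G (contractEdge G u v) := by
  refine ⟨fun a => {x | x = a.1 ∨ (a.1 = u ∧ x = v)}, fun a => ⟨a.1, .inl rfl⟩,
    fun a => induce_connected_of_forall_eq_or_adj (.inl rfl) ?_, fun a b hab => ?_,
    fun a b hab => ?_⟩
  · rintro x (rfl | ⟨hau, rfl⟩)
    exacts [.inl rfl, .inr (hau ▸ huv)]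
  · have hab' : a.1 ≠ b.1 := Subtype.coe_ne_coe.mpr hab
    rw [Set.disjoint_left]
    rintro x (rfl | ⟨hau, rfl⟩) (hxb | ⟨hbu, hvb⟩)
    exacts [hab' hxb, a.2 hvb, b.2 hxb.symm, hab' (hau.trans hbu.symm)]
  · simp only [contractEdge, fromRel_adj, ne_eq, hab, not_false_eq_true, true_and,
      Set.mem_ofPred_eq, exists_eq_or_imp]
    grind [SimpleGraph.adj_comm]

end InducedMinor

theorem stmt11_general {V W : Type} [Fintype V]
    (G : SimpleGraph V) (H : SimpleGraph W) (h : IsInducedMinor G H) :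
    treeMu H ≤ treeMu G ∧
    (∀ v : V, treeMu (G.induce {u | u ≠ v}) ≤ treeMu G) ∧
    (∀ u v : V, G.Adj u v → treeMu (contractEdge G u v) ≤ treeMu G) :=
  ⟨h.treeMu_le, fun v => (isInducedMinor_induce G {u | u ≠ v}).treeMu_le,
    fun _ _ huv => (isInducedMinor_contractEdge huv).treeMu_le⟩

/-- induced matching treewidth is monotone under induced minors;
in particular under vertex deletion and edge contraction. -/
theorem stmt11 {V W : Type} [Fintype V] [Fintype W] [DecidableEq V]
    (G : SimpleGraph V) (H : SimpleGraph W) (h : IsInducedMinor G H) :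
    treeMu H ≤ treeMu G ∧
    (∀ v : V, treeMu (G.induce {u | u ≠ v}) ≤ treeMu G) ∧
    (∀ u v : V, G.Adj u v → treeMu (contractEdge G u v) ≤ treeMu G) :=
  stmt11_general G H h

end Paper
end

section
/- For every positive integer n, the n-dimensional hypercube graph Q_n satisfies tree-μ(Q_n) ≥ ⌊n/2⌋. -/
open SimpleGraph

namespace Paper

/-- The `n`-dimensional hypercube graph: vertices are `{0,1}^n`, two vertices
adjacent iff they differ in exactly one coordinate. -/
def hypercube (n : ℕ) : SimpleGraph (Fin n → Bool) :=
  SimpleGraph.fromRel (fun x y => ∃! i : Fin n, x i ≠ y i)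


/-! ### Auxiliary development -/

section Aux

variable {n : ℕ}

/-- Hamming distance. -/
def hdist (x y : Fin n → Bool) : ℕ := (Finset.univ.filter (fun i => x i ≠ y i)).card

lemma hdist_comm (x y : Fin n → Bool) : hdist x y = hdist y x := by
  unfold hdist
  congr 1
  ext i
  simp [ne_comm]

@[simp] lemma hdist_self (x : Fin n → Bool) : hdist x x = 0 := by
  simp [hdist]

lemma hdist_eq_zero_iff {x y : Fin n → Bool} : hdist x y = 0 ↔ x = y := by
  constructor
  · intro h
    funext i
    by_contra hi
    have hmem : i ∈ Finset.univ.filter (fun i => x i ≠ y i) := by simp [hi]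
    have hz : Finset.univ.filter (fun i => x i ≠ y i) = ∅ := Finset.card_eq_zero.mp h
    rw [hz] at hmem
    simp at hmem
  · rintro rfl; simp

lemma existsUnique_iff_hdist {x y : Fin n → Bool} :
    (∃! i : Fin n, x i ≠ y i) ↔ hdist x y = 1 := by
  rw [hdist, Finset.card_eq_one]
  constructor
  · rintro ⟨i, hi, hu⟩
    refine ⟨i, ?_⟩
    rw [Finset.eq_singleton_iff_unique_mem]
    exact ⟨by simpa using hi, fun j hj => hu j (by simpa using hj)⟩
  · rintro ⟨a, ha⟩
    refine ⟨a, ?_, ?_⟩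
    · have : a ∈ Finset.univ.filter (fun i => x i ≠ y i) := by rw [ha]; simp
      simpa using this
    · intro j hj
      have : j ∈ Finset.univ.filter (fun i => x i ≠ y i) := by simpa using hj
      rw [ha] at this; simpa using this

lemma hypercube_adj {x y : Fin n → Bool} : (hypercube n).Adj x y ↔ hdist x y = 1 := by
  rw [hypercube, fromRel_adj]
  constructor
  · rintro ⟨hne, h | h⟩
    · exact existsUnique_iff_hdist.mp h
    · rw [hdist_comm]; exact existsUnique_iff_hdist.mp h
  · intro h
    have hne : x ≠ y := by
      rintro rfl
      simp at h
    exact ⟨hne, Or.inl (existsUnique_iff_hdist.mpr h)⟩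

/-- Flip one coordinate. -/
def flip (γ : Fin n) (x : Fin n → Bool) : Fin n → Bool := Function.update x γ (!x γ)

lemma flip_apply_same (γ : Fin n) (x : Fin n → Bool) : flip γ x γ = !x γ :=
  Function.update_self _ _ _

lemma flip_apply_ne {γ i : Fin n} (h : i ≠ γ) (x : Fin n → Bool) : flip γ x i = x i :=
  Function.update_of_ne h _ _

lemma hdist_flip_eq {γ : Fin n} {x y : Fin n → Bool} (h : x γ = y γ) :
    hdist (flip γ x) y = hdist x y + 1 := by
  have hγnot : γ ∉ Finset.univ.filter (fun i => x i ≠ y i) := by simp [h]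
  have hset : Finset.univ.filter (fun i => flip γ x i ≠ y i)
      = insert γ (Finset.univ.filter (fun i => x i ≠ y i)) := by
    ext i
    by_cases hi : i = γ
    · subst hi
      simp only [Finset.mem_filter, Finset.mem_univ, true_and, Finset.mem_insert]
      rw [flip_apply_same]
      cases hb : x i <;> cases hb' : y i <;> simp_all
    · simp only [Finset.mem_filter, Finset.mem_univ, true_and, Finset.mem_insert,
        flip_apply_ne hi]
      tauto
  rw [hdist, hset, Finset.card_insert_of_notMem hγnot, hdist]

lemma hdist_flip_ne {γ : Fin n} {x y : Fin n → Bool} (h : x γ ≠ y γ) :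
    hdist (flip γ x) y = hdist x y - 1 := by
  have hγmem : γ ∈ Finset.univ.filter (fun i => x i ≠ y i) := by simp [h]
  have hset : Finset.univ.filter (fun i => flip γ x i ≠ y i)
      = (Finset.univ.filter (fun i => x i ≠ y i)).erase γ := by
    ext i
    by_cases hi : i = γ
    · subst hi
      simp only [Finset.mem_filter, Finset.mem_univ, true_and, Finset.mem_erase]
      rw [flip_apply_same]
      cases hb : x i <;> cases hb' : y i <;> simp_all
    · simp only [Finset.mem_filter, Finset.mem_univ, true_and, Finset.mem_erase,
        flip_apply_ne hi]
      tauto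
  rw [hdist, hset, Finset.card_erase_of_mem hγmem, hdist]

lemma hdist_flip_ge (γ : Fin n) (x y : Fin n → Bool) :
    hdist x y - 1 ≤ hdist (flip γ x) y := by
  by_cases h : x γ = y γ
  · rw [hdist_flip_eq h]; omega
  · rw [hdist_flip_ne h]

lemma hdist_flip_flip_same (γ : Fin n) (x y : Fin n → Bool) :
    hdist (flip γ x) (flip γ y) = hdist x y := by
  unfold hdist
  congr 1
  ext i
  by_cases hi : i = γ
  · subst hi
    simp only [Finset.mem_filter, Finset.mem_univ, true_and, flip_apply_same]
    cases hb : x i <;> cases hb' : y i <;> simp_all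
  · simp [flip_apply_ne hi]

lemma hdist_flip_self (γ : Fin n) (x : Fin n → Bool) : hdist x (flip γ x) = 1 := by
  rw [hdist_comm, hdist_flip_eq rfl, hdist_self]

/-- weight parity in `ZMod 2`. -/
def parity (x : Fin n → Bool) : ZMod 2 := ((Finset.univ.filter (fun i => x i = true)).card : ZMod 2)

lemma hdist_cast_parity (x y : Fin n → Bool) :
    ((hdist x y : ZMod 2)) = parity x + parity y := by
  unfold hdist parity
  rw [Finset.card_filter, Finset.card_filter, Finset.card_filter]
  push_cast
  rw [← Finset.sum_add_distrib]
  apply Finset.sum_congr rfl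
  intro i _
  cases hb : x i <;> cases hb' : y i <;> simp_all <;> decide

lemma even_hdist_of_parity {x y : Fin n → Bool} (h : parity x = parity y) :
    2 ∣ hdist x y := by
  have h2 : ((hdist x y : ZMod 2)) = 0 := by
    rw [hdist_cast_parity, h]
    have : (parity y + parity y) = 2 * parity y := by ring
    rw [this]
    have h2 : (2 : ZMod 2) = 0 := by decide
    rw [h2, zero_mul]
  exact (ZMod.natCast_eq_zero_iff _ 2).mp h2

lemma two_le_hdist_of_parity {x y : Fin n → Bool} (hne : x ≠ y) (h : parity x = parity y) :
    2 ≤ hdist x y := by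
  have hdvd := even_hdist_of_parity h
  have h0 : hdist x y ≠ 0 := fun hc => hne (hdist_eq_zero_iff.mp hc)
  omega


lemma harvest (hn : 2 ≤ n) (X : Set (Fin n → Bool)) (F : Finset (Fin n → Bool))
    (hFX : ↑F ⊆ X) (hF : n ≤ F.card) :
    ∃ M : Finset ((Fin n → Bool) × (Fin n → Bool)),
      IsInducedMatching (hypercube n) M ∧ Touches M X ∧ M.card = n / 2 := by
  classical
  set k := n / 2 with hkdef
  have hkn : 2 * k ≤ n := by omega
  have hk1 : 1 ≤ k := by
    have := Nat.div_le_div_right (c := 2) hn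
    simpa using this
  -- parity pigeonhole
  obtain ⟨c, hc⟩ : ∃ c : ZMod 2, k ≤ (F.filter (fun x => parity x = c)).card := by
    by_contra hcon
    push_neg at hcon
    have h0 := hcon 0
    have h1 := hcon 1
    have hsplit := Finset.card_filter_add_card_filter_not
      (s := F) (p := fun x => parity x = 0)
    have heq : F.filter (fun x => ¬ parity x = 0) = F.filter (fun x => parity x = 1) := by
      apply Finset.filter_congr
      intro x _
      constructor
      · intro h
        have : ∀ a : ZMod 2, ¬ a = 0 → a = 1 := by decide
        exact this _ h
      · intro h
        rw [h]; decide
    rw [heq] at hsplit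
    omega
  obtain ⟨C, hCsub, hCcard⟩ := Finset.exists_subset_card_eq hc
  have hCpar : ∀ x ∈ C, parity x = c := fun x hx => (Finset.mem_filter.mp (hCsub hx)).2
  have hCF : C ⊆ F := hCsub.trans (Finset.filter_subset _ _)
  let e := C.equivFinOfCardEq hCcard
  let s : Fin k → (Fin n → Bool) := fun i => (e.symm i : Fin n → Bool)
  have hs_inj : Function.Injective s := by
    intro i j hij
    have := e.symm.injective (Subtype.ext hij)
    exact this
  have hs_mem : ∀ i, s i ∈ C := fun i => (e.symm i).2
  have hdist_even : ∀ i j : Fin k, i ≠ j →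
      2 ≤ hdist (s i) (s j) ∧ 2 ∣ hdist (s i) (s j) := by
    intro i j hij
    have hne : s i ≠ s j := fun h => hij (hs_inj h)
    have hp : parity (s i) = parity (s j) := by
      rw [hCpar _ (hs_mem i), hCpar _ (hs_mem j)]
    exact ⟨two_le_hdist_of_parity hne hp, even_hdist_of_parity hp⟩
  -- choice of fresh directions
  have hchoice : ∀ i : Fin k, ∃ γ : Fin n,
      ∀ j, j ≠ i → hdist (s i) (s j) = 2 → s i γ = s j γ := by
    intro i
    set bad : Finset (Fin n) :=
      Finset.univ.filter (fun γ => ∃ j, j ≠ i ∧ hdist (s i) (s j) = 2 ∧ s i γ ≠ s j γ)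
      with hbaddef
    have hsub : bad ⊆ ((Finset.univ.erase i).filter (fun j => hdist (s i) (s j) = 2)).biUnion
        (fun j => Finset.univ.filter (fun γ => s i γ ≠ s j γ)) := by
      intro γ hγ
      rw [hbaddef, Finset.mem_filter] at hγ
      obtain ⟨-, j, hji, h2, hne⟩ := hγ
      apply Finset.mem_biUnion.mpr
      refine ⟨j, ?_, ?_⟩
      · simp [hji, h2]
      · simp [hne]
    have hcard : bad.card ≤ 2 * (k - 1) := by
      have hb1 := Finset.card_le_card hsub
      have hb2 := Finset.card_biUnion_le
        (s := (Finset.univ.erase i).filter (fun j => hdist (s i) (s j) = 2))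
        (t := fun j => Finset.univ.filter (fun γ => s i γ ≠ s j γ))
      have hb3 : ∑ j ∈ (Finset.univ.erase i).filter (fun j => hdist (s i) (s j) = 2),
          (Finset.univ.filter (fun γ => s i γ ≠ s j γ)).card
          ≤ ∑ j ∈ (Finset.univ.erase i).filter (fun j => hdist (s i) (s j) = 2), 2 := by
        apply Finset.sum_le_sum
        intro j hj
        have h2 : hdist (s i) (s j) = 2 := (Finset.mem_filter.mp hj).2
        exact le_of_eq h2
      have hb4 : ∑ _j ∈ (Finset.univ.erase i).filter (fun j => hdist (s i) (s j) = 2), 2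
          = 2 * ((Finset.univ.erase i).filter (fun j => hdist (s i) (s j) = 2)).card := by
        rw [Finset.sum_const, smul_eq_mul, mul_comm]
      have hb5 : ((Finset.univ.erase i).filter (fun j => hdist (s i) (s j) = 2)).card ≤ k - 1 := by
        calc ((Finset.univ.erase i).filter (fun j => hdist (s i) (s j) = 2)).card
            ≤ (Finset.univ.erase i).card := Finset.card_le_card (Finset.filter_subset _ _)
          _ = k - 1 := by
              rw [Finset.card_erase_of_mem (Finset.mem_univ i), Finset.card_univ,
                Fintype.card_fin]
      omega
    have hlt : bad.card < n := by omega
    have hne : (Finset.univ \ bad).Nonempty := by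
      rw [Finset.sdiff_nonempty]
      intro hsubu
      have hcl := Finset.card_le_card hsubu
      rw [Finset.card_univ, Fintype.card_fin] at hcl
      omega
    obtain ⟨γ, hγ⟩ := hne
    rw [Finset.mem_sdiff] at hγ
    refine ⟨γ, ?_⟩
    intro j hji h2
    by_contra hneq
    exact hγ.2 (by rw [hbaddef, Finset.mem_filter]; exact ⟨Finset.mem_univ _, j, hji, h2, hneq⟩)
  let γ : Fin k → Fin n := fun i => (hchoice i).choose
  have hγspec : ∀ i : Fin k, ∀ j, j ≠ i → hdist (s i) (s j) = 2 → s i (γ i) = s j (γ i) :=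
    fun i => (hchoice i).choose_spec
  let t : Fin k → (Fin n → Bool) := fun i => flip (γ i) (s i)
  have dts : ∀ i j : Fin k, i ≠ j → 3 ≤ hdist (t i) (s j) := by
    intro i j hij
    obtain ⟨h2, hdvd⟩ := hdist_even i j hij
    by_cases hcase : hdist (s i) (s j) = 2
    · have hspec := hγspec i j (Ne.symm hij) hcase
      show 3 ≤ hdist (flip (γ i) (s i)) (s j)
      rw [hdist_flip_eq hspec, hcase]
    · have h4 : 4 ≤ hdist (s i) (s j) := by omega
      have hge := hdist_flip_ge (γ i) (s i) (s j)
      show 3 ≤ hdist (flip (γ i) (s i)) (s j)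
      omega
  have dtt : ∀ i j : Fin k, i ≠ j → 2 ≤ hdist (t i) (t j) := by
    intro i j hij
    obtain ⟨h2, hdvd⟩ := hdist_even i j hij
    by_cases hcase : hdist (s i) (s j) = 2
    · by_cases hγeq : γ i = γ j
      · show 2 ≤ hdist (flip (γ i) (s i)) (flip (γ j) (s j))
        rw [hγeq, hdist_flip_flip_same, hcase]
      · have hcase' : hdist (s j) (s i) = 2 := by rw [hdist_comm]; exact hcase
        have hspecj : s j (γ j) = s i (γ j) := hγspec j i hij hcase'
        have heq : s j (γ j) = t i (γ j) := by
          rw [hspecj]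
          exact (flip_apply_ne (fun h => hγeq (h.symm)) (s i)).symm
        have hstep : hdist (flip (γ j) (s j)) (t i) = hdist (s j) (t i) + 1 :=
          hdist_flip_eq heq
        have h3 : 3 ≤ hdist (t i) (s j) := dts i j hij
        have hc2 : hdist (s j) (t i) = hdist (t i) (s j) := hdist_comm _ _
        have : hdist (t i) (t j) = hdist (flip (γ j) (s j)) (t i) := by
          rw [hdist_comm]
        omega
    · have h4 : 4 ≤ hdist (s i) (s j) := by omega
      have g2 : 3 ≤ hdist (s i) (t j) := by
        rw [hdist_comm]; exact dts j i (Ne.symm hij)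
      have g1 := hdist_flip_ge (γ i) (s i) (t j)
      show 2 ≤ hdist (flip (γ i) (s i)) (t j)
      omega
  have hne_of_dist : ∀ {a b : Fin n → Bool}, 2 ≤ hdist a b → a ≠ b := by
    intro a b h hab
    rw [hab] at h
    rw [hdist_self] at h
    omega
  have hnadj_of_dist : ∀ {a b : Fin n → Bool}, 2 ≤ hdist a b → ¬ (hypercube n).Adj a b := by
    intro a b h hadj
    rw [hypercube_adj] at hadj
    omega
  refine ⟨Finset.image (fun i => (s i, t i)) Finset.univ, ?_, ?_, ?_⟩
  · constructor
    · rintro p hp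
      obtain ⟨i, -, rfl⟩ := Finset.mem_image.mp hp
      exact hypercube_adj.mpr (hdist_flip_self (γ i) (s i))
    · rintro p hp q hq hpq
      obtain ⟨i, -, rfl⟩ := Finset.mem_image.mp hp
      obtain ⟨j, -, rfl⟩ := Finset.mem_image.mp hq
      have hij : i ≠ j := by rintro rfl; exact hpq rfl
      have Hss : 2 ≤ hdist (s i) (s j) := (hdist_even i j hij).1
      have Hts : 2 ≤ hdist (t i) (s j) := le_trans (by norm_num) (dts i j hij)
      have Hst : 2 ≤ hdist (s i) (t j) := by
        rw [hdist_comm]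
        exact le_trans (by norm_num) (dts j i (Ne.symm hij))
      have Htt : 2 ≤ hdist (t i) (t j) := dtt i j hij
      exact ⟨⟨hne_of_dist Hss, hne_of_dist Hst, hne_of_dist Hts, hne_of_dist Htt⟩,
        ⟨hnadj_of_dist Hss, hnadj_of_dist Hst, hnadj_of_dist Hts, hnadj_of_dist Htt⟩⟩
  · rintro p hp
    obtain ⟨i, -, rfl⟩ := Finset.mem_image.mp hp
    exact Or.inl (hFX (Finset.mem_coe.mpr (hCF (hs_mem i))))
  · rw [Finset.card_image_of_injective _ ?_, Finset.card_univ, Fintype.card_fin]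
    intro i j hij
    exact hs_inj (congrArg Prod.fst hij)


/-- The hypercube with a finite set of vertices forbidden. -/
def avoid (n : ℕ) (S : Finset (Fin n → Bool)) : SimpleGraph (Fin n → Bool) where
  Adj a b := (hypercube n).Adj a b ∧ a ∉ S ∧ b ∉ S
  symm := by
    refine ⟨?_⟩
    rintro a b ⟨h, ha, hb⟩
    exact ⟨h.symm, hb, ha⟩
  loopless := by
    refine ⟨?_⟩
    rintro a ⟨h, -, -⟩
    exact (hypercube n).irrefl h

lemma hdist_insertNth_same {m : ℕ} (p : Fin (m+1)) (b : Bool) (z z' : Fin m → Bool) :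
    hdist (p.insertNth b z) (p.insertNth b z') = hdist z z' := by
  classical
  unfold hdist
  have himg : Finset.univ.filter (fun j => (p.insertNth b z : Fin (m+1) → Bool) j ≠ (p.insertNth b z' : Fin (m+1) → Bool) j)
      = Finset.image p.succAbove (Finset.univ.filter (fun i => z i ≠ z' i)) := by
    ext j
    simp only [Finset.mem_filter, Finset.mem_univ, true_and, Finset.mem_image]
    constructor
    · intro hj
      have hne : j ≠ p := by
        rintro rfl
        rw [Fin.insertNth_apply_same, Fin.insertNth_apply_same] at hj
        exact hj rfl
      obtain ⟨i, hi⟩ := Fin.exists_succAbove_eq hne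
      refine ⟨i, ?_, hi⟩
      rw [← hi, Fin.insertNth_apply_succAbove, Fin.insertNth_apply_succAbove] at hj
      exact hj
    · rintro ⟨i, hi, rfl⟩
      rw [Fin.insertNth_apply_succAbove, Fin.insertNth_apply_succAbove]
      exact hi
  rw [himg, Finset.card_image_of_injective _ Fin.succAbove_right_injective]

lemma hdist_insertNth_cross {m : ℕ} (p : Fin (m+1)) {b b' : Bool} (hbb : b ≠ b')
    (z : Fin m → Bool) : hdist (p.insertNth b z) (p.insertNth b' z) = 1 := by
  classical
  unfold hdist
  have hset : Finset.univ.filter (fun j => (p.insertNth b z : Fin (m+1) → Bool) j ≠ (p.insertNth b' z : Fin (m+1) → Bool) j) = {p} := by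
    ext j
    simp only [Finset.mem_filter, Finset.mem_univ, true_and, Finset.mem_singleton]
    constructor
    · intro hj
      by_contra hne
      obtain ⟨i, hi⟩ := Fin.exists_succAbove_eq hne
      rw [← hi, Fin.insertNth_apply_succAbove, Fin.insertNth_apply_succAbove] at hj
      exact hj rfl
    · rintro rfl
      rw [Fin.insertNth_apply_same, Fin.insertNth_apply_same]
      exact hbb
  rw [hset, Finset.card_singleton]

section Halves
variable {m : ℕ} (S : Finset (Fin (m+1) → Bool)) (p : Fin (m+1)) (b : Bool)

/-- the trace of `S` on the half `x p = b`, viewed inside `Q_m`. -/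
noncomputable def SbF : Finset (Fin m → Bool) :=
  (S.filter (fun x => x p = b)).image (fun x => p.removeNth x)

lemma mem_SbF_iff {z : Fin m → Bool} : z ∈ SbF S p b ↔ p.insertNth b z ∈ S := by
  classical
  unfold SbF
  rw [Finset.mem_image]
  constructor
  · rintro ⟨w, hw, rfl⟩
    rw [Finset.mem_filter] at hw
    rw [← hw.2, Fin.insertNth_self_removeNth]
    exact hw.1
  · intro h
    refine ⟨p.insertNth b z, ?_, ?_⟩
    · rw [Finset.mem_filter]
      exact ⟨h, Fin.insertNth_apply_same _ _ _⟩
    · rw [Fin.removeNth_insertNth]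

lemma SbF_card_le : (SbF S p b).card ≤ (S.filter (fun x => x p = b)).card :=
  Finset.card_image_le

/-- Hom from the avoided small cube into the avoided big cube (into the half `x p = b`). -/
noncomputable def halfHom : avoid m (SbF S p b) →g avoid (m+1) S where
  toFun z := p.insertNth b z
  map_rel' := by
    rintro z z' ⟨hadj, hz, hz'⟩
    refine ⟨?_, ?_, ?_⟩
    · rw [hypercube_adj] at hadj ⊢
      rw [hdist_insertNth_same]
      exact hadj
    · intro hc
      exact hz ((mem_SbF_iff S p b).mpr hc)
    · intro hc
      exact hz' ((mem_SbF_iff S p b).mpr hc)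

end Halves

lemma half_reach {m : ℕ} (S : Finset (Fin (m+1) → Bool)) (p : Fin (m+1)) (b : Bool)
    (IH : ∀ S' : Finset (Fin m → Bool), S'.card < m →
      ∀ x y, x ∉ S' → y ∉ S' → (avoid m S').Reachable x y)
    (hcard : (SbF S p b).card < m)
    (w1 w2 : Fin (m+1) → Bool) (h1 : w1 p = b) (h2 : w2 p = b)
    (hw1 : w1 ∉ S) (hw2 : w2 ∉ S) :
    (avoid (m+1) S).Reachable w1 w2 := by
  have hz1 : p.removeNth w1 ∉ SbF S p b := by
    rw [mem_SbF_iff, ← h1, Fin.insertNth_self_removeNth]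
    exact hw1
  have hz2 : p.removeNth w2 ∉ SbF S p b := by
    rw [mem_SbF_iff, ← h2, Fin.insertNth_self_removeNth]
    exact hw2
  have hreach := IH (SbF S p b) hcard _ _ hz1 hz2
  have := hreach.map (halfHom S p b)
  have e1 : (halfHom S p b) (p.removeNth w1) = w1 := by
    show p.insertNth b (p.removeNth w1) = w1
    rw [← h1, Fin.insertNth_self_removeNth]
  have e2 : (halfHom S p b) (p.removeNth w2) = w2 := by
    show p.insertNth b (p.removeNth w2) = w2
    rw [← h2, Fin.insertNth_self_removeNth]
  rwa [e1, e2] at this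

lemma bool_ne_iff {a b : Bool} : ¬ a = b ↔ a = !b := by
  cases a <;> cases b <;> simp

theorem cube_conn : ∀ n : ℕ, 1 ≤ n → ∀ S : Finset (Fin n → Bool), S.card < n →
    ∀ x y, x ∉ S → y ∉ S → (avoid n S).Reachable x y := by
  intro n
  induction n with
  | zero => intro h; omega
  | succ m IH =>
    intro _ S hS x y hx hy
    rcases Nat.eq_zero_or_pos m with hm0 | hm1
    · -- base case n = 1
      subst hm0
      have hSempty : S = ∅ := Finset.card_eq_zero.mp (by omega)
      subst hSempty
      rcases eq_or_ne x y with rfl | hne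
      · exact Reachable.refl x
      · apply Adj.reachable
        refine ⟨?_, by simp, by simp⟩
        rw [hypercube_adj]
        have hle : hdist x y ≤ 1 := by
          have h := Finset.card_filter_le (Finset.univ : Finset (Fin 1)) (fun i => x i ≠ y i)
          unfold hdist
          simpa using h
        have hnz : hdist x y ≠ 0 := fun hc => hne (hdist_eq_zero_iff.mp hc)
        omega
    · -- step, m ≥ 1
      have IH' : ∀ S' : Finset (Fin m → Bool), S'.card < m →
          ∀ x y, x ∉ S' → y ∉ S' → (avoid m S').Reachable x y := fun S' h => IH hm1 S' h
      by_cases hstrad : ∃ p : Fin (m+1),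
          (S.filter (fun w => w p = false)).Nonempty ∧ (S.filter (fun w => w p = true)).Nonempty
      · obtain ⟨p, hf, ht⟩ := hstrad
        -- both halves have strictly fewer than m forbidden vertices
        have hsplit := Finset.card_filter_add_card_filter_not
          (s := S) (p := fun w => w p = false)
        have heq : S.filter (fun w => ¬ w p = false) = S.filter (fun w => w p = true) := by
          apply Finset.filter_congr
          intro w _
          simp [bool_ne_iff]
        rw [heq] at hsplit
        have key : ∀ A B C SS : ℕ, SS < m + 1 → A + B = SS → 1 ≤ A → 1 ≤ B → C ≤ A → C < m := by
          clear hsplit heq hf ht hx hy IH IH'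
          intro A B C SS h0 h1 h2 h3 h4
          omega
        have hcards : ∀ b : Bool, (SbF S p b).card < m := by
          intro b
          have h1 : 1 ≤ (S.filter (fun w => w p = false)).card := Finset.card_pos.mpr hf
          have h2 : 1 ≤ (S.filter (fun w => w p = true)).card := Finset.card_pos.mpr ht
          have hle := SbF_card_le S p b
          cases b
          · exact key _ _ _ _ hS hsplit h1 h2 hle
          · refine key _ _ _ _ hS ?_ h2 h1 hle
            rw [Nat.add_comm]
            exact hsplit
        -- a clean crossing column
        have hcross : ∃ z : Fin m → Bool, ∀ b : Bool, (p.insertNth b z : Fin (m+1) → Bool) ∉ S := by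
          by_contra hcon
          push_neg at hcon
          choose f hfspec using hcon
          have hinj : Function.Injective (fun z : Fin m → Bool => (p.insertNth (f z) z : Fin (m+1) → Bool)) := by
            intro z z' hzz
            have := congrArg (fun w => p.removeNth w) hzz
            simpa only [Fin.removeNth_insertNth] using this
          have hcard := Finset.card_le_card_of_injOn
            (s := (Finset.univ : Finset (Fin m → Bool))) (t := S)
            (fun z : Fin m → Bool => (p.insertNth (f z) z : Fin (m+1) → Bool))
            (fun z _ => hfspec z) (Function.Injective.injOn hinj)
          rw [Finset.card_univ] at hcard
          have h2m : m < 2 ^ m := Nat.lt_two_pow_self (n := m)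
          have hcf : Fintype.card (Fin m → Bool) = 2 ^ m := by
            simp [Fintype.card_fun]
          rw [hcf] at hcard
          exact absurd (le_trans hcard (Nat.lt_succ_iff.mp hS)) (not_le.mpr h2m)
        obtain ⟨z, hz⟩ := hcross
        have r1 : (avoid (m+1) S).Reachable x (p.insertNth (x p) (p.removeNth x)) := by
          rw [Fin.insertNth_self_removeNth]
        have rx : (avoid (m+1) S).Reachable x (p.insertNth (x p) z) := by
          have := half_reach S p (x p) IH' (hcards (x p)) x (p.insertNth (x p) z)
            rfl (Fin.insertNth_apply_same _ _ _) hx (hz (x p))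
          exact this
        have ry : (avoid (m+1) S).Reachable (p.insertNth (y p) z) y := by
          have := half_reach S p (y p) IH' (hcards (y p)) (p.insertNth (y p) z) y
            (Fin.insertNth_apply_same _ _ _) rfl (hz (y p)) hy
          exact this
        rcases eq_or_ne (x p) (y p) with hxy | hxy
        · rw [hxy] at rx
          exact rx.trans ry
        · have hadj : (avoid (m+1) S).Adj (p.insertNth (x p) z) (p.insertNth (y p) z) := by
            refine ⟨?_, hz (x p), hz (y p)⟩
            rw [hypercube_adj]
            exact hdist_insertNth_cross p hxy z
          exact rx.trans (hadj.reachable.trans ry)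
      · -- S lies inside one half of coordinate 0
        push_neg at hstrad
        set p : Fin (m+1) := 0 with hp
        have hone : (S.filter (fun w => w p = false)) = ∅ ∨
            (S.filter (fun w => w p = true)) = ∅ := by
          rcases Finset.eq_empty_or_nonempty (S.filter (fun w => w p = false)) with h | h
          · exact Or.inl h
          · exact Or.inr (Finset.not_nonempty_iff_eq_empty.mp (fun hc => by
              exact absurd hc (Finset.not_nonempty_iff_eq_empty.mpr (hstrad p h))))
        -- clean value d : the half with no S vertices
        obtain ⟨d, hd⟩ : ∃ d : Bool, (S.filter (fun w => w p = d)) = ∅ := by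
          rcases hone with h | h
          · exact ⟨false, h⟩
          · exact ⟨true, h⟩
        have hSbF : SbF S p d = ∅ := by
          unfold SbF
          rw [hd, Finset.image_empty]
        have hcardd : (SbF S p d).card < m := by
          rw [hSbF]
          simpa using hm1
        -- move x and y into the clean half
        have hclean : ∀ w : Fin (m+1) → Bool, p.insertNth d (p.removeNth w) ∉ S := by
          intro w hc
          have : p.insertNth d (p.removeNth w) ∈ S.filter (fun w => w p = d) := by
            rw [Finset.mem_filter]
            exact ⟨hc, Fin.insertNth_apply_same _ _ _⟩
          rw [hd] at this
          simp at this
        have step : ∀ w : Fin (m+1) → Bool, w ∉ S →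
            (avoid (m+1) S).Reachable w (p.insertNth d (p.removeNth w)) := by
          intro w hw
          rcases eq_or_ne (w p) d with hwd | hwd
          · rw [← hwd, Fin.insertNth_self_removeNth]
          · apply Adj.reachable
            refine ⟨?_, hw, hclean w⟩
            rw [hypercube_adj]
            have : w = p.insertNth (w p) (p.removeNth w) := (Fin.insertNth_self_removeNth _ _).symm
            rw [this]
            rw [Fin.removeNth_insertNth]
            exact hdist_insertNth_cross p hwd _
        have hmid := half_reach S p d IH' hcardd
          (p.insertNth d (p.removeNth x)) (p.insertNth d (p.removeNth y))
          (Fin.insertNth_apply_same _ _ _) (Fin.insertNth_apply_same _ _ _)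
          (hclean x) (hclean y)
        exact ((step x hx).trans hmid).trans (step y hy).symm


/-- walk-closure of a predicate -/
lemma walk_closed {ι : Type} {G : SimpleGraph ι} (P : ι → Prop)
    (hcl : ∀ a b, G.Adj a b → P a → P b) :
    ∀ {a b : ι}, G.Walk a b → P a → P b := by
  intro a b w
  induction w with
  | nil => exact id
  | cons h p ih => intro ha; exact ih (hcl _ _ h ha)

lemma reach_closed {ι : Type} {G : SimpleGraph ι} (P : ι → Prop)
    (hcl : ∀ a b, G.Adj a b → P a → P b) {a b : ι}
    (h : G.Reachable a b) (ha : P a) : P b := by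
  obtain ⟨w⟩ := h
  exact walk_closed P hcl w ha

/-- crossing pair along a walk -/
lemma walk_cross {ι : Type} {G : SimpleGraph ι} (A : Set ι) :
    ∀ {a b : ι} (w : G.Walk a b), a ∈ A → b ∉ A →
    ∃ p q, G.Adj p q ∧ p ∈ A ∧ q ∉ A ∧ p ∈ w.support ∧ q ∈ w.support := by
  intro a b w
  induction w with
  | nil => intro h h'; exact absurd h h'
  | @cons a c b h p ih =>
    intro ha hb
    by_cases hc : c ∈ A
    · obtain ⟨p', q', hadj, hp', hq', hps, hqs⟩ := ih hc hb
      refine ⟨p', q', hadj, hp', hq', ?_, ?_⟩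
      · rw [Walk.support_cons]; exact List.mem_cons_of_mem _ hps
      · rw [Walk.support_cons]; exact List.mem_cons_of_mem _ hqs
    · refine ⟨a, c, h, ha, hc, ?_, ?_⟩
      · exact Walk.start_mem_support _
      · rw [Walk.support_cons]
        exact List.mem_cons_of_mem _ (Walk.start_mem_support _)

section Sides

variable {ι : Type} (T : SimpleGraph ι)

/-- the set of nodes on the `u`-side of the tree edge `{u,v}`. -/
def Tside (u v : ι) : Set ι := {t | (T.deleteEdges {s(u,v)}).Reachable u t}

variable {T}

lemma Tside_self (u v : ι) : u ∈ Tside T u v := Reachable.refl u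

lemma Tside_not_mem (hT : T.IsTree) (huv : T.Adj u v) : v ∉ Tside T u v := by
  have hb := (isAcyclic_iff_forall_adj_isBridge.mp hT.2) huv
  rw [isBridge_iff] at hb
  intro hc
  exact hb hc

lemma Tside_closed {u v a b : ι} (hab : T.Adj a b) (hne : s(a,b) ≠ s(u,v))
    (ha : a ∈ Tside T u v) : b ∈ Tside T u v := by
  refine ha.trans (Adj.reachable ?_)
  rw [deleteEdges_adj]
  exact ⟨hab, by simpa using hne⟩

lemma Tside_cover (hT : T.IsTree) (huv : T.Adj u v) (t : ι) : t ∈ Tside T u v ∨ t ∈ Tside T v u := by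
  have hreach : T.Reachable u t := hT.1.preconnected u t
  obtain ⟨w⟩ := hreach
  refine walk_closed (G := T) (fun s => s ∈ Tside T u v ∨ s ∈ Tside T v u) ?_ w
    (Or.inl (Tside_self u v))
  intro a b hab hor
  by_cases he : s(a,b) = s(u,v)
  · rw [Sym2.eq_iff] at he
    rcases he with ⟨rfl, rfl⟩ | ⟨rfl, rfl⟩
    · exact Or.inr (Tside_self b a)
    · exact Or.inl (Tside_self b a)
  · rcases hor with h | h
    · exact Or.inl (Tside_closed hab he h)
    · refine Or.inr (Tside_closed hab ?_ h)
      exact fun hc => he (hc.trans Sym2.eq_swap)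

lemma Tside_disjoint (hT : T.IsTree) (huv : T.Adj u v) {t : ι}
    (h1 : t ∈ Tside T u v) (h2 : t ∈ Tside T v u) : False := by
  have hb := (isAcyclic_iff_forall_adj_isBridge.mp hT.2) huv
  rw [isBridge_iff] at hb
  apply hb
  have h2' : (T.deleteEdges {s(u,v)}).Reachable v t := by
    have : ({s(v,u)} : Set (Sym2 ι)) = {s(u,v)} := by rw [Sym2.eq_swap]
    rw [← this]
    exact h2
  exact h1.trans h2'.symm

/-- interpolation : a connected family crossing the edge contains both endpoints -/
lemma Tside_interpolate (hT : T.IsTree) (huv : T.Adj u v) (C : Set ι)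
    (hconn : (T.induce C).Connected)
    {t₁ t₂ : ι} (h₁ : t₁ ∈ C) (h₂ : t₂ ∈ C)
    (hA : t₁ ∈ Tside T u v) (hB : t₂ ∈ Tside T v u) : u ∈ C ∧ v ∈ C := by
  have hreach : (T.induce C).Reachable ⟨t₁, h₁⟩ ⟨t₂, h₂⟩ := hconn.preconnected _ _
  obtain ⟨w0⟩ := hreach
  let w := w0.map (Embedding.induce C).toHom
  have hsupp : ∀ s ∈ w.support, s ∈ C := by
    intro s hs
    rw [Walk.support_map, List.mem_map] at hs
    obtain ⟨⟨s', hs'⟩, -, rfl⟩ := hs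
    exact hs'
  have ht2A : t₂ ∉ Tside T u v := fun hc => Tside_disjoint hT huv hc hB
  obtain ⟨p, q, hadj, hp, hq, hps, hqs⟩ := walk_cross (Tside T u v) w hA ht2A
  have he : s(p,q) = s(u,v) := by
    by_contra hne
    exact hq (Tside_closed hadj hne hp)
  rw [Sym2.eq_iff] at he
  rcases he with ⟨rfl, rfl⟩ | ⟨rfl, rfl⟩
  · exact ⟨hsupp _ hps, hsupp _ hqs⟩
  · exfalso
    exact (Tside_not_mem hT huv) hp

/-- growing the side across a pivot -/
lemma Tside_grow (hT : T.IsTree) (huv : T.Adj u v) (hvw : T.Adj v w) (hwu : w ≠ u) :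
    Tside T u v ⊆ Tside T v w := by
  intro t ht
  classical
  have hpath := (ht : (T.deleteEdges {s(u,v)}).Reachable u t)
  obtain ⟨w0⟩ := hpath
  let P := w0.toPath
  have hvsup : v ∉ (P : (T.deleteEdges {s(u,v)}).Walk u t).support := by
    intro hc
    have hb := (isAcyclic_iff_forall_adj_isBridge.mp hT.2) huv
    rw [isBridge_iff] at hb
    exact hb ⟨(P : (T.deleteEdges {s(u,v)}).Walk u t).takeUntil v hc⟩
  have hedges : ∀ e ∈ (P : (T.deleteEdges {s(u,v)}).Walk u t).edges,
      e ∈ (T.deleteEdges {s(v,w)}).edgeSet := by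
    intro e he
    have heT : e ∈ (T.deleteEdges {s(u,v)}).edgeSet := Walk.edges_subset_edgeSet _ he
    rw [edgeSet_deleteEdges] at heT ⊢
    refine ⟨heT.1, ?_⟩
    intro hc
    rw [Set.mem_singleton_iff] at hc
    subst hc
    exact hvsup (Walk.fst_mem_support_of_mem_edges _ he)
  have hwalk := ((P : (T.deleteEdges {s(u,v)}).Walk u t).transfer _ hedges)
  have hvu : (T.deleteEdges {s(v,w)}).Adj v u := by
    rw [deleteEdges_adj]
    refine ⟨huv.symm, ?_⟩
    rw [Set.mem_singleton_iff, Sym2.eq_iff]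
    rintro (⟨-, h⟩ | ⟨h1, h2⟩)
    · exact hwu h.symm
    · exact hwu (h2.trans h1).symm
  exact (Adj.reachable hvu).trans ⟨hwalk⟩

end Sides


lemma bigbag (hn : 1 ≤ n) (D : TreeDecomp (hypercube n)) :
    ∃ (t : D.ι) (F : Finset (Fin n → Bool)), ↑F ⊆ D.bag t ∧ n ≤ F.card := by
  classical
  letI := D.fin
  set T := D.tree with hTdef
  have hT : T.IsTree := D.isTree
  set Vcov : Set D.ι → Set (Fin n → Bool) := fun A => {x | ∃ t ∈ A, x ∈ D.bag t} with hVcovdef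
  have interp : ∀ (u v : D.ι), T.Adj u v → ∀ z, z ∈ Vcov (Tside T u v) →
      z ∈ Vcov (Tside T v u) → z ∈ D.bag u ∧ z ∈ D.bag v := by
    intro u v huv z hzA hzB
    obtain ⟨t₁, ht₁, hz₁⟩ := hzA
    obtain ⟨t₂, ht₂, hz₂⟩ := hzB
    exact Tside_interpolate hT huv {t | z ∈ D.bag t} (D.coherent z) hz₁ hz₂ ht₁ ht₂
  have hcardV : Fintype.card (Fin n → Bool) = 2 ^ n := by simp [Fintype.card_fun]
  have hnle2n : n ≤ Fintype.card (Fin n → Bool) := by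
    rw [hcardV]; exact le_of_lt (Nat.lt_two_pow_self (n := n))
  by_cases hgood : ∃ u v : D.ι, T.Adj u v ∧
      (Vcov (Tside T u v) \ (D.bag u ∩ D.bag v)).Nonempty ∧
      (Vcov (Tside T v u) \ (D.bag u ∩ D.bag v)).Nonempty
  · obtain ⟨u, v, huv, ⟨x, hxA, hxS⟩, ⟨y, hyB, hyS⟩⟩ := hgood
    set S : Set (Fin n → Bool) := D.bag u ∩ D.bag v with hSdef
    have hSfin : S.Finite := Set.toFinite _
    refine ⟨u, hSfin.toFinset, ?_, ?_⟩
    · rw [Set.Finite.coe_toFinset]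
      exact Set.inter_subset_left
    · by_contra hcon
      push_neg at hcon
      have hxSF : x ∉ hSfin.toFinset := by rwa [Set.Finite.mem_toFinset]
      have hySF : y ∉ hSfin.toFinset := by rwa [Set.Finite.mem_toFinset]
      have hreach := cube_conn n hn hSfin.toFinset hcon x y hxSF hySF
      have hclosed : ∀ a b, (avoid n hSfin.toFinset).Adj a b →
          (a ∈ Vcov (Tside T u v) ∧ a ∉ S) → (b ∈ Vcov (Tside T u v) ∧ b ∉ S) := by
        rintro a b ⟨hadj, -, hbSF⟩ ⟨haA, haS⟩
        have hbS : b ∉ S := by rwa [Set.Finite.mem_toFinset] at hbSF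
        refine ⟨?_, hbS⟩
        obtain ⟨t, hat, hbt⟩ := D.edge_bag hadj
        rcases Tside_cover hT huv t with h | h
        · exact ⟨t, h, hbt⟩
        · exfalso
          have haB : a ∈ Vcov (Tside T v u) := ⟨t, h, hat⟩
          obtain ⟨h1, h2⟩ := interp u v huv a haA haB
          exact haS ⟨h1, h2⟩
      have hy' := reach_closed _ hclosed hreach ⟨hxA, hxS⟩
      obtain ⟨h1, h2⟩ := interp u v huv y hy'.1 hyB
      exact hyS ⟨h1, h2⟩
  · push_neg at hgood
    have hbad : ∀ u v : D.ι, T.Adj u v →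
        Vcov (Tside T u v) ⊆ D.bag u ∩ D.bag v ∨
        Vcov (Tside T v u) ⊆ D.bag u ∩ D.bag v := by
      intro u v huv
      by_cases hA : (Vcov (Tside T u v) \ (D.bag u ∩ D.bag v)).Nonempty
      · right
        have hB := hgood u v huv hA
        rwa [Set.diff_eq_empty] at hB
      · left
        rw [Set.not_nonempty_iff_eq_empty, Set.diff_eq_empty] at hA
        exact hA
    by_cases hedge : ∃ u v : D.ι, T.Adj u v
    · obtain ⟨u₀, v₀, huv₀⟩ := hedge
      set P0 : Finset (D.ι × D.ι) := Finset.univ.filter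
        (fun e => T.Adj e.1 e.2 ∧ Vcov (Tside T e.1 e.2) ⊆ D.bag e.1 ∩ D.bag e.2) with hP0
      have hP0ne : P0.Nonempty := by
        rcases hbad u₀ v₀ huv₀ with h | h
        · exact ⟨(u₀, v₀), by rw [hP0, Finset.mem_filter]; exact ⟨Finset.mem_univ _, huv₀, h⟩⟩
        · refine ⟨(v₀, u₀), ?_⟩
          rw [hP0, Finset.mem_filter]
          refine ⟨Finset.mem_univ _, huv₀.symm, ?_⟩
          rw [Set.inter_comm]
          exact h
      obtain ⟨e, heP, hemax⟩ := Finset.exists_max_image P0 (fun e => (Tside T e.1 e.2).ncard) hP0ne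
      obtain ⟨u, v⟩ := e
      rw [hP0, Finset.mem_filter] at heP
      obtain ⟨-, huv, hfull⟩ := heP
      refine ⟨v, Finset.univ, ?_, ?_⟩
      · intro x _
        show x ∈ D.bag v
        by_cases hxA : x ∈ Vcov (Tside T u v)
        · exact (hfull hxA).2
        by_cases hxv : x ∈ D.bag v
        · exact hxv
        obtain ⟨t₁, ht₁⟩ := D.mem_bag x
        have ht₁B : t₁ ∈ Tside T v u := by
          rcases Tside_cover hT huv t₁ with h | h
          · exact absurd ⟨t₁, h, ht₁⟩ hxA
          · exact h
        have ht₁v : t₁ ≠ v := fun hc => hxv (hc ▸ ht₁)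
        obtain ⟨w0⟩ := (ht₁B : (T.deleteEdges {s(v,u)}).Reachable v t₁)
        obtain ⟨pw, hpw⟩ := w0.toPath
        cases pw with
        | nil => exact absurd rfl (Ne.symm ht₁v)
        | @cons _ w _ hadj q =>
          have hvw : T.Adj v w := ((deleteEdges_adj).mp hadj).1
          have hwu : w ≠ u := by
            rintro rfl
            have := ((deleteEdges_adj).mp hadj).2
            simp at this
          have hvq : v ∉ q.support := ((Walk.cons_isPath_iff _ _).mp hpw).2
          have hedges : ∀ e' ∈ q.edges, e' ∈ (T.deleteEdges {s(w,v)}).edgeSet := by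
            intro e' he'
            have heT : e' ∈ (T.deleteEdges {s(v,u)}).edgeSet := Walk.edges_subset_edgeSet _ he'
            rw [edgeSet_deleteEdges] at heT ⊢
            refine ⟨heT.1, ?_⟩
            intro hc
            rw [Set.mem_singleton_iff] at hc
            subst hc
            exact hvq (Walk.snd_mem_support_of_mem_edges _ he')
          have ht₁w : t₁ ∈ Tside T w v := ⟨q.transfer _ hedges⟩
          rcases hbad v w hvw with hfull' | hfull'
          · exfalso
            have hgrow : Tside T u v ⊆ Tside T v w := Tside_grow hT huv hvw hwu
            have hssub : Tside T u v ⊂ Tside T v w := by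
              refine ⟨hgrow, fun hsub => ?_⟩
              exact (Tside_not_mem hT huv) (hsub (Tside_self v w))
            have hlt := Set.ncard_lt_ncard hssub (Set.toFinite _)
            have hmem : (v, w) ∈ P0 := by
              rw [hP0, Finset.mem_filter]
              exact ⟨Finset.mem_univ _, hvw, hfull'⟩
            have := hemax (v, w) hmem
            simp only at this
            omega
          · exact (hfull' ⟨t₁, ht₁w, ht₁⟩).1
      · rw [Finset.card_univ]
        exact hnle2n
    · push_neg at hedge
      have hne : Nonempty D.ι := hT.1.nonempty
      obtain ⟨t₀⟩ := hne
      refine ⟨t₀, Finset.univ, ?_, ?_⟩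
      · intro x _
        show x ∈ D.bag t₀
        obtain ⟨t, ht⟩ := D.mem_bag x
        have htt : t = t₀ := by
          obtain ⟨w⟩ := hT.1.preconnected t t₀
          cases w with
          | nil => rfl
          | cons h p => exact absurd h (hedge _ _)
        rwa [← htt]
      · rw [Finset.card_univ]
        exact hnle2n


/-- The trivial (one-bag) tree decomposition. -/
noncomputable def trivDecomp (n : ℕ) : TreeDecomp (hypercube n) where
  ι := PUnit
  fin := inferInstance
  tree := ⊥
  isTree := by
    constructor
    · rw [connected_iff]
      refine ⟨?_, ⟨PUnit.unit⟩⟩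
      intro u v
      cases u; cases v
      exact Reachable.refl _
    · intro v c hc
      cases c with
      | nil => exact hc.ne_nil rfl
      | cons h p => simp at h
  bag := fun _ => Set.univ
  mem_bag := fun v => ⟨PUnit.unit, trivial⟩
  edge_bag := fun u w _ => ⟨PUnit.unit, trivial, trivial⟩
  coherent := fun v => by
    rw [connected_iff]
    refine ⟨?_, ⟨⟨PUnit.unit, trivial⟩⟩⟩
    intro a b
    have hab : a = b := Subsingleton.elim a b
    rw [hab]

end Aux

/-- tree-μ(Q_n) ≥ ⌊n/2⌋. -/
theorem stmt14 (n : ℕ) (hn : 0 < n) : n / 2 ≤ treeMu (hypercube n) := by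
  rcases Nat.lt_or_ge n 2 with h2 | h2
  · have hz : n / 2 = 0 := by omega
    rw [hz]
    exact Nat.zero_le _
  · apply le_csInf
    · exact ⟨mu (hypercube n) (trivDecomp n), trivDecomp n, rfl⟩
    · rintro b ⟨D, rfl⟩
      obtain ⟨t, F, hFsub, hFcard⟩ := bigbag (by omega) D
      obtain ⟨M, hM1, hM2, hM3⟩ := harvest h2 (D.bag t) F hFsub hFcard
      apply le_csSup
      · refine ⟨Fintype.card ((Fin n → Bool) × (Fin n → Bool)), ?_⟩
        rintro m ⟨t', M', -, -, rfl⟩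
        exact le_trans (Finset.card_le_univ M') (le_of_eq Finset.card_univ)
      · exact ⟨t, M, hM1, hM2, hM3⟩


end Paper
end

section
/- For every finite simple graph G with at least one vertex and every tree decomposition 𝒯 of G, there exists a vertex v ∈ V(G) such that the closed neighborhood N[v] = {v} ∪ {u : uv ∈ E(G)} is entirely contained in some bag of 𝒯. -/
/-!
Root the decomposition tree at a node `r` and let `top v` be the node closest to `r` among those
whose bag contains `v`; by connectivity of that subtree, `top v` lies on the tree path from `r` to
every bag containing `v`. Choose `v` with `top v` as far from `r` as possible. For a neighbour `u`
of `v`, both tops lie on the path from `r` to a bag containing `u` and `v`, and `top u` is not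
farther from `r`, so `top v` lies on the path from `top u` to that bag, which stays among the
bags containing `u`. Hence `N[v]` is contained in the bag of `top v`.
-/

open SimpleGraph

namespace SimpleGraph

variable {V : Type*} {G : SimpleGraph V}

theorem exists_walk_support_subset_of_preconnected_induce {s : Set V}
    (hs : (G.induce s).Preconnected) {a b : V} (ha : a ∈ s) (hb : b ∈ s) :
    ∃ w : G.Walk a b, ∀ x ∈ w.support, x ∈ s := by
  obtain ⟨w⟩ := hs ⟨a, ha⟩ ⟨b, hb⟩
  refine ⟨w.map (Embedding.induce s).toHom, ?_⟩
  intro x hx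
  replace hx : x ∈ w.support.map (Embedding.induce (G := G) s).toHom := by
    rwa [← Walk.support_map]
  obtain ⟨⟨y, hy⟩, -, rfl⟩ := List.mem_map.mp hx
  exact hy

theorem Walk.eq_of_mem_support_of_length_eq_dist {r x y : V} (q : G.Walk r y)
    (hq : q.length = G.dist r y) (hx : x ∈ q.support) (h : G.dist r y ≤ G.dist r x) :
    x = y := by
  classical
  have hsplit := congrArg Walk.length (q.take_spec hx)
  have hprefix := dist_le (q.takeUntil x hx)
  rw [Walk.length_append] at hsplit
  exact Walk.eq_of_length_eq_zero (p := q.dropUntil x hx) (by omega)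

theorem IsAcyclic.length_eq_dist_of_isPath (hG : G.IsAcyclic) {a b : V} {p : G.Walk a b}
    (hp : p.IsPath) : p.length = G.dist a b := by
  obtain ⟨q, hq, hqdist⟩ := p.reachable.exists_path_of_dist
  obtain rfl : p = q := congrArg Subtype.val ((hG.subsingleton_path a b).elim ⟨p, hp⟩ ⟨q, hq⟩)
  exact hqdist

theorem IsAcyclic.support_subset_support_of_isPath (hG : G.IsAcyclic) {a b : V}
    {p : G.Walk a b} (hp : p.IsPath) (w : G.Walk a b) : p.support ⊆ w.support := by
  classical
  obtain rfl : p = w.bypass :=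
    congrArg Subtype.val ((hG.subsingleton_path a b).elim ⟨p, hp⟩ ⟨w.bypass, w.bypass_isPath⟩)
  exact w.support_bypass_subset_support

theorem IsAcyclic.mem_support_of_isMinOn_dist (hG : G.IsAcyclic) {S : Set V} {r s m : V}
    (w : G.Walk s m) (hw : ∀ x ∈ w.support, x ∈ S) (hm : IsMinOn (G.dist r) S m)
    (p : G.Walk r s) (hp : p.IsPath) : m ∈ p.support := by
  classical
  induction w with
  | nil => exact p.end_mem_support
  | @cons s c m h w ih =>
    have hwS : ∀ x ∈ w.support, x ∈ S := fun x hx => hw x (by simp [hx])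
    by_cases hc : c ∈ p.support
    · exact p.support_takeUntil_subset_support hc (ih hwS hm _ (hp.takeUntil hc))
    · have hpc : (p.concat h).IsPath := hp.concat hc h
      have hm' := ih hwS hm _ hpc
      rw [Walk.support_concat, List.mem_append, List.mem_singleton] at hm'
      refine hm'.resolve_right ?_
      rintro rfl
      have hlen := hG.length_eq_dist_of_isPath hpc
      rw [Walk.length_concat, hG.length_eq_dist_of_isPath hp] at hlen
      have hmin : G.dist r m ≤ G.dist r s := hm (hw s (by simp))
      omega

end SimpleGraph

namespace Paper

namespace TreeDecomp

variable {V : Type} {G : SimpleGraph V} (D : TreeDecomp G)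

theorem exists_walk_mem_bag (v : V) {a b : D.ι} (ha : v ∈ D.bag a) (hb : v ∈ D.bag b) :
    ∃ w : D.tree.Walk a b, ∀ t ∈ w.support, v ∈ D.bag t :=
  exists_walk_support_subset_of_preconnected_induce (D.coherent v).preconnected ha hb

noncomputable def top (r : D.ι) (v : V) : D.ι :=
  Function.argminOn (D.tree.dist r) {t | v ∈ D.bag t} (D.mem_bag v)

variable (r : D.ι) (v : V)

theorem mem_bag_top : v ∈ D.bag (D.top r v) :=
  Function.argminOn_mem (D.tree.dist r) {t | v ∈ D.bag t} _

theorem isMinOn_dist_top : IsMinOn (D.tree.dist r) {t | v ∈ D.bag t} (D.top r v) :=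
  fun _ ht => Function.argminOn_le (D.tree.dist r) {t | v ∈ D.bag t} ht

variable {r v}

theorem top_mem_support {s : D.ι} (hs : v ∈ D.bag s) (p : D.tree.Walk r s) (hp : p.IsPath) :
    D.top r v ∈ p.support := by
  obtain ⟨w, hw⟩ := D.exists_walk_mem_bag v hs (D.mem_bag_top r v)
  exact D.isTree.isAcyclic.mem_support_of_isMinOn_dist w hw (D.isMinOn_dist_top r v) p hp

theorem mem_bag_top_of_adj {u : V} (huv : G.Adj v u)
    (hdist : D.tree.dist r (D.top r u) ≤ D.tree.dist r (D.top r v)) :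
    u ∈ D.bag (D.top r v) := by
  classical
  have hT := D.isTree.isAcyclic
  obtain ⟨s, hvs, hus⟩ := D.edge_bag huv
  obtain ⟨p, hp, -⟩ := (D.isTree.connected r s).exists_path_of_dist
  have htop_v := D.top_mem_support hvs p hp
  have htop_u := D.top_mem_support hus p hp
  rw [← p.take_spec htop_u, Walk.mem_support_append_iff] at htop_v
  rcases htop_v with hprefix | hsuffix
  · have hprefix_path := hp.takeUntil htop_u
    rw [(p.takeUntil _ htop_u).eq_of_mem_support_of_length_eq_dist
      (hT.length_eq_dist_of_isPath hprefix_path) hprefix hdist]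
    exact D.mem_bag_top r u
  · obtain ⟨w, hw⟩ := D.exists_walk_mem_bag u (D.mem_bag_top r u) hus
    exact hw _ (hT.support_subset_support_of_isPath (hp.dropUntil htop_u) w hsuffix)

end TreeDecomp

/-- in every tree decomposition of a nonempty finite graph, some
closed neighborhood `N[v]` is contained in a single bag. -/
theorem stmt16 {V : Type} [Fintype V] [Nonempty V] (G : SimpleGraph V)
    (D : TreeDecomp G) :
    ∃ (v : V) (t : D.ι), insert v (G.neighborSet v) ⊆ D.bag t := by
  obtain ⟨r⟩ := D.isTree.connected.nonempty
  obtain ⟨v, hv⟩ := Finite.exists_max fun v => D.tree.dist r (D.top r v)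
  refine ⟨v, D.top r v, ?_⟩
  rintro u (rfl | hu)
  · exact D.mem_bag_top r u
  · exact D.mem_bag_top_of_adj hu (hv u)

end Paper
end
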